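/- arXiv:2502.09032 — 5 statements merged into one kernel-verified Lean document; each statement's English description precedes it below -/
import Mathlib

section
/- For a centered Gaussian vector (X_1, ..., X_n), define Y_1 = X_1 and Y_j = X_j - X_{j-1} for j = 2, ..., n, and let σ_j² = Var(Y_j). Then for all real a_1, ..., a_n, Var(∑_{j=1}^n a_j Y_j) ≥ (det Cov(X_1,...,X_n) / (n ∏_{j=1}^n σ_j²)) · ∑_{j=1}^n a_j² σ_j². -/
open MeasureTheory ProbabilityTheory Finset Matrix

section Aux

private lemma prod_le_exp_sum' {ι : Type*} (s : Finset ι) (x : ι → ℝ) (hx : ∀ i ∈ s, 0 ≤ x i) :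
    ∏ i ∈ s, x i ≤ Real.exp (∑ i ∈ s, (x i - 1)) := by
  calc ∏ i ∈ s, x i ≤ ∏ i ∈ s, Real.exp (x i - 1) :=
        Finset.prod_le_prod hx (fun i _ => by linarith [Real.add_one_le_exp (x i - 1)])
    _ = Real.exp (∑ i ∈ s, (x i - 1)) := (Real.exp_sum s _).symm

private lemma corr_quadform_lower {n : ℕ} (hn : 1 ≤ n) {M : Matrix (Fin n) (Fin n) ℝ}
    (hM : M.PosSemidef) (hdiag : ∀ i, M i i = 1) (v : Fin n → ℝ) :
    (M.det / n) * ∑ i, v i ^ 2 ≤ v ⬝ᵥ M *ᵥ v := by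
  have hne : Nonempty (Fin n) := Fin.pos_iff_nonempty.mp hn
  have herm := hM.1
  set lam := herm.eigenvalues with hlam
  have hlam0 : ∀ i, 0 ≤ lam i := hM.eigenvalues_nonneg
  have htr : M.trace = (n : ℝ) := by simp [Matrix.trace, Matrix.diag, hdiag]
  have hsum : ∑ i, lam i = (n : ℝ) := by
    have h1 := congrArg Matrix.trace herm.spectral_theorem
    rw [Unitary.conjStarAlgAut_apply, Matrix.trace_mul_cycle,
      Matrix.mem_unitaryGroup_iff'.mp (Matrix.IsHermitian.eigenvectorUnitary herm).2,
      Matrix.one_mul, Matrix.trace_diagonal, htr] at h1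
    simpa using h1.symm
  set U : Matrix (Fin n) (Fin n) ℝ :=
    (Matrix.IsHermitian.eigenvectorUnitary herm : Matrix (Fin n) (Fin n) ℝ) with hU
  have hstar : star U = Uᵀ := rfl
  set w : Fin n → ℝ := Uᵀ *ᵥ v with hw
  have hUU : U * Uᵀ = 1 := by
    rw [← hstar]
    exact Matrix.mem_unitaryGroup_iff.mp (Matrix.IsHermitian.eigenvectorUnitary herm).2
  have hform : v ⬝ᵥ M *ᵥ v = ∑ i, lam i * (w i) ^ 2 := by
    conv_lhs => rw [herm.spectral_theorem, Unitary.conjStarAlgAut_apply]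
    rw [hstar, ← Matrix.mulVec_mulVec, ← Matrix.mulVec_mulVec, Matrix.dotProduct_mulVec,
      ← Matrix.mulVec_transpose]
    simp only [← hw, dotProduct, Matrix.mulVec_diagonal]
    exact Finset.sum_congr rfl fun i _ => by simp [hlam]; ring
  have hnorm : ∑ i, (w i) ^ 2 = ∑ i, v i ^ 2 := by
    have h2 : w ⬝ᵥ w = v ⬝ᵥ v := by
      rw [hw, Matrix.mulVec_transpose, ← Matrix.dotProduct_mulVec,
        ← Matrix.mulVec_transpose U, Matrix.mulVec_mulVec, hUU, Matrix.one_mulVec]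
    simpa [dotProduct, pow_two] using h2
  -- min eigenvalue
  obtain ⟨m, -, hm⟩ :=
    Finset.exists_min_image Finset.univ lam ⟨Classical.arbitrary _, Finset.mem_univ _⟩
  have hmle : ∀ i, lam m ≤ lam i := fun i => hm i (Finset.mem_univ i)
  -- product of the other eigenvalues is at most n
  have hprod_rest : ∏ i ∈ Finset.univ.erase m, lam i ≤ (n : ℝ) := by
    rcases le_or_gt n 2 with h2 | h2
    · calc ∏ i ∈ Finset.univ.erase m, lam i ≤ ∏ _i ∈ Finset.univ.erase m, (n : ℝ) :=
            Finset.prod_le_prod (fun i _ => hlam0 i)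
              (fun i _ => hsum ▸ Finset.single_le_sum (fun j _ => hlam0 j) (Finset.mem_univ i))
        _ = (n : ℝ) ^ (n - 1) := by
            rw [Finset.prod_const, Finset.card_erase_of_mem (Finset.mem_univ m)]
            simp
        _ ≤ (n : ℝ) := by
            interval_cases n
            · simp
            · simp
    · have hsume : ∑ i ∈ Finset.univ.erase m, (lam i - 1) = 1 - lam m := by
        rw [Finset.sum_sub_distrib, Finset.sum_erase_eq_sub (Finset.mem_univ m), hsum,
          Finset.sum_const, Finset.card_erase_of_mem (Finset.mem_univ m), Finset.card_univ,
          Fintype.card_fin]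
        rw [nsmul_eq_mul, Nat.cast_sub hn]
        push_cast
        ring
      calc ∏ i ∈ Finset.univ.erase m, lam i
          ≤ Real.exp (∑ i ∈ Finset.univ.erase m, (lam i - 1)) :=
            prod_le_exp_sum' _ _ (fun i _ => hlam0 i)
        _ ≤ Real.exp 1 := by
            rw [hsume]; exact Real.exp_le_exp.mpr (by linarith [hlam0 m])
        _ ≤ 3 := by linarith [Real.exp_one_lt_d9.le]
        _ ≤ (n : ℝ) := by exact_mod_cast h2
  have hdet : M.det = lam m * ∏ i ∈ Finset.univ.erase m, lam i := by
    rw [herm.det_eq_prod_eigenvalues, ← Finset.prod_erase_mul _ _ (Finset.mem_univ m)]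
    simp [hlam, mul_comm]
  have hdetle : M.det / n ≤ lam m := by
    rw [div_le_iff₀ (by positivity), hdet]
    exact mul_le_mul_of_nonneg_left hprod_rest (hlam0 m)
  calc (M.det / n) * ∑ i, v i ^ 2 ≤ lam m * ∑ i, v i ^ 2 :=
        mul_le_mul_of_nonneg_right hdetle (Finset.sum_nonneg fun i _ => sq_nonneg _)
    _ = lam m * ∑ i, w i ^ 2 := by rw [hnorm]
    _ = ∑ i, lam m * w i ^ 2 := Finset.mul_sum _ _ _
    _ ≤ ∑ i, lam i * w i ^ 2 :=
        Finset.sum_le_sum fun i _ => mul_le_mul_of_nonneg_right (hmle i) (sq_nonneg _)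
    _ = v ⬝ᵥ M *ᵥ v := hform.symm

private lemma memL2_mul_integrable' {Ω : Type*} [MeasurableSpace Ω] {μ : Measure Ω}
    {f g : Ω → ℝ} (hf : MemLp f 2 μ) (hg : MemLp g 2 μ) :
    Integrable (fun ω => f ω * g ω) μ := by
  have h : MemLp (f • g) 1 μ := hg.smul hf
  rw [← memLp_one_iff_integrable]
  exact h

private lemma integral_sum_mul_sum' {Ω : Type*} [MeasurableSpace Ω] {μ : Measure Ω}
    {ι κ : Type*} (s : Finset ι) (t : Finset κ) (f : ι → Ω → ℝ) (g : κ → Ω → ℝ)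
    (hf : ∀ i ∈ s, MemLp (f i) 2 μ) (hg : ∀ j ∈ t, MemLp (g j) 2 μ) :
    ∫ ω, (∑ i ∈ s, f i ω) * (∑ j ∈ t, g j ω) ∂μ
      = ∑ i ∈ s, ∑ j ∈ t, ∫ ω, f i ω * g j ω ∂μ := by
  have h1 : ∀ ω : Ω, (∑ i ∈ s, f i ω) * (∑ j ∈ t, g j ω) = ∑ i ∈ s, ∑ j ∈ t, f i ω * g j ω := by
    intro ω; rw [Finset.sum_mul_sum]
  simp_rw [h1]
  rw [integral_finset_sum _ (fun i hi =>
    integrable_finset_sum _ (fun j hj => memL2_mul_integrable' (hf i hi) (hg j hj)))]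
  exact Finset.sum_congr rfl fun i hi => integral_finset_sum _ fun j hj =>
    memL2_mul_integrable' (hf i hi) (hg j hj)

end Aux

/-- **Berman's inequality.** For a centered Gaussian vector `(X 0, …, X (n-1))`,
with increments `Y 0 = X 0`, `Y (j+1) = X (j+1) - X j` and `σ j ^ 2 = Var (Y j) > 0`,
the variance of any linear combination of the `Y j` is bounded below by
`det Cov(X) / (n ∏ σ_j²) · ∑ a_j² σ_j²`. -/
theorem berman_inequality
    {Ω : Type*} [MeasurableSpace Ω] (μ : Measure Ω) [IsProbabilityMeasure μ]
    (n : ℕ) (hn : 1 ≤ n) (X : ℕ → Ω → ℝ)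
    (hL2 : ∀ j, MemLp (X j) 2 μ)
    (hcentered : ∀ j, ∫ ω, X j ω ∂μ = 0)
    (hGauss : ∀ c : ℕ → ℝ, ∃ v : NNReal,
      Measure.map (fun ω => ∑ j ∈ Finset.range n, c j * X j ω) μ = gaussianReal 0 v)
    (Y : ℕ → Ω → ℝ)
    (hY0 : Y 0 = X 0)
    (hYs : ∀ j, Y (j + 1) = fun ω => X (j + 1) ω - X j ω)
    (hσpos : ∀ j < n, 0 < variance (Y j) μ)
    (a : ℕ → ℝ) :
    variance (fun ω => ∑ j ∈ Finset.range n, a j * Y j ω) μ ≥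
      ((Matrix.of fun i j : Fin n => ∫ ω, X i ω * X j ω ∂μ).det /
          (n * ∏ j ∈ Finset.range n, variance (Y j) μ)) *
        ∑ j ∈ Finset.range n, a j ^ 2 * variance (Y j) μ := by
  classical
  -- basic facts about Y
  have hYL2 : ∀ j, MemLp (Y j) 2 μ := by
    intro j
    cases j with
    | zero => rw [hY0]; exact hL2 0
    | succ k => rw [hYs k]; exact (hL2 (k + 1)).sub (hL2 k)
  have hYmean : ∀ j, ∫ ω, Y j ω ∂μ = 0 := by
    intro j
    cases j with
    | zero => rw [hY0]; exact hcentered 0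
    | succ k =>
        rw [hYs k, integral_sub ((hL2 (k + 1)).integrable one_le_two)
          ((hL2 k).integrable one_le_two), hcentered, hcentered, sub_zero]
  have hXsum : ∀ i : ℕ, ∀ ω, X i ω = ∑ k ∈ Finset.range (i + 1), Y k ω := by
    intro i
    induction i with
    | zero => intro ω; simp [hY0]
    | succ i ih =>
        intro ω
        rw [Finset.sum_range_succ, ← ih ω, hYs i]
        ring
  -- the covariance data
  set d : Fin n → ℝ := fun i => variance (Y i) μ with hd
  have hdpos : ∀ i : Fin n, 0 < d i := fun i => hσpos i i.isLt
  set σ : Fin n → ℝ := fun i => Real.sqrt (d i) with hσ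
  have hσpos' : ∀ i, 0 < σ i := fun i => Real.sqrt_pos.mpr (hdpos i)
  have hσsq : ∀ i, σ i * σ i = d i := fun i => Real.mul_self_sqrt (hdpos i).le
  set cN : ℕ → ℕ → ℝ := fun k l => ∫ ω, Y k ω * Y l ω ∂μ with hcN
  set c : Matrix (Fin n) (Fin n) ℝ := Matrix.of fun i j : Fin n => cN i j with hc
  -- quadratic form of c
  have hq : ∀ v : Fin n → ℝ,
      ∫ ω, (∑ i : Fin n, v i * Y i ω) ^ 2 ∂μ = v ⬝ᵥ c *ᵥ v := by
    intro v
    have hexp := integral_sum_mul_sum' (Finset.univ : Finset (Fin n)) Finset.univ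
      (fun i ω => v i * Y i ω) (fun j ω => v j * Y j ω)
      (fun i _ => (hYL2 i).const_mul (v i)) (fun j _ => (hYL2 j).const_mul (v j))
    simp_rw [pow_two]
    rw [hexp]
    simp only [dotProduct, Matrix.mulVec, hc, Matrix.of_apply]
    refine Finset.sum_congr rfl fun i _ => ?_
    rw [Finset.mul_sum]
    refine Finset.sum_congr rfl fun j _ => ?_
    rw [show (fun ω => v i * Y i ω * (v j * Y j ω))
        = fun ω => v i * (Y i ω * Y j ω * v j) from funext fun ω => by ring,
      integral_const_mul, integral_mul_const]
  -- c is positive semidefinite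
  have hcsymm : c.IsHermitian := by
    rw [Matrix.IsHermitian]
    ext i j
    simp only [Matrix.conjTranspose_apply, hc, Matrix.of_apply, star_trivial, hcN]
    simp_rw [mul_comm (Y (j : ℕ) _) (Y (i : ℕ) _)]
  have hcpsd : c.PosSemidef := by
    refine Matrix.PosSemidef.of_dotProduct_mulVec_nonneg hcsymm fun x => ?_
    have hsx : star x = x := funext fun i => rfl
    rw [hsx, ← hq x]
    exact integral_nonneg fun ω => sq_nonneg _
  -- diagonal entries of c
  have hcd : ∀ i : Fin n, c i i = d i := by
    intro i
    have hv : variance (Y i) μ = ∫ ω, (Y i ω) ^ 2 ∂μ := by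
      rw [variance_eq_sub (hYL2 i)]
      have h0 : (∫ ω, Y (i : ℕ) ω ∂μ) = 0 := hYmean i
      simp only [Pi.pow_apply, h0]
      norm_num
    simp only [hc, Matrix.of_apply, hcN, hd]
    rw [hv]
    simp_rw [pow_two]
  -- reindexing sums
  have hrange : ∀ (m : ℕ), m < n → ∀ (f : ℕ → ℝ),
      ∑ k : Fin n, (if (k : ℕ) ≤ m then f k else 0) = ∑ k ∈ Finset.range (m + 1), f k := by
    intro m hm f
    rw [Fin.sum_univ_eq_sum_range (fun k => if k ≤ m then f k else 0) n, ← Finset.sum_filter]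
    congr 1
    ext x
    simp only [Finset.mem_filter, Finset.mem_range, Nat.lt_succ_iff]
    omega
  -- reduction of the covariance matrix of X
  set L : Matrix (Fin n) (Fin n) ℝ :=
    Matrix.of fun i k : Fin n => if (k : ℕ) ≤ (i : ℕ) then 1 else 0 with hL
  have hCov : (Matrix.of fun i j : Fin n => ∫ ω, X i ω * X j ω ∂μ) = L * c * Lᵀ := by
    ext i j
    have hA : ∫ ω, X i ω * X j ω ∂μ
        = ∑ k ∈ Finset.range ((i : ℕ) + 1), ∑ l ∈ Finset.range ((j : ℕ) + 1), cN k l := by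
      have h1 : (fun ω => X (i : ℕ) ω * X (j : ℕ) ω)
          = fun ω => (∑ k ∈ Finset.range ((i : ℕ) + 1), Y k ω)
              * (∑ l ∈ Finset.range ((j : ℕ) + 1), Y l ω) := by
        funext ω
        rw [hXsum i ω, hXsum j ω]
      calc ∫ ω, X (i : ℕ) ω * X (j : ℕ) ω ∂μ
          = ∫ ω, (∑ k ∈ Finset.range ((i : ℕ) + 1), Y k ω)
              * (∑ l ∈ Finset.range ((j : ℕ) + 1), Y l ω) ∂μ := by rw [h1]
        _ = ∑ k ∈ Finset.range ((i : ℕ) + 1), ∑ l ∈ Finset.range ((j : ℕ) + 1), cN k l :=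
            integral_sum_mul_sum' _ _ _ _ (fun k _ => hYL2 k) (fun l _ => hYL2 l)
    have hB : (L * c * Lᵀ) i j
        = ∑ k ∈ Finset.range ((i : ℕ) + 1), ∑ l ∈ Finset.range ((j : ℕ) + 1), cN k l := by
      calc (L * c * Lᵀ) i j
          = ∑ l : Fin n, (∑ k : Fin n, (if (k : ℕ) ≤ (i : ℕ) then cN k l else 0))
              * (if (l : ℕ) ≤ (j : ℕ) then 1 else 0) := by
            simp [Matrix.mul_apply, Matrix.transpose_apply, hL, hc, ite_mul, one_mul, zero_mul]
        _ = ∑ l : Fin n, (if (l : ℕ) ≤ (j : ℕ)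
              then ∑ k ∈ Finset.range ((i : ℕ) + 1), cN k l else 0) := by
            refine Finset.sum_congr rfl fun l _ => ?_
            rw [hrange i i.isLt (fun k => cN k l)]
            split <;> simp
        _ = ∑ l ∈ Finset.range ((j : ℕ) + 1), ∑ k ∈ Finset.range ((i : ℕ) + 1), cN k l :=
            hrange j j.isLt (fun l => ∑ k ∈ Finset.range ((i : ℕ) + 1), cN k l)
        _ = ∑ k ∈ Finset.range ((i : ℕ) + 1), ∑ l ∈ Finset.range ((j : ℕ) + 1), cN k l :=
            Finset.sum_comm
    rw [Matrix.of_apply, hA, hB]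
  have hdetL : L.det = 1 := by
    have hbt : L.BlockTriangular OrderDual.toDual := by
      intro p q hpq
      have hpq' : (p : ℕ) < (q : ℕ) := hpq
      simp only [hL, Matrix.of_apply]
      rw [if_neg (by omega)]
    rw [Matrix.det_of_lowerTriangular L hbt]
    simp [hL]
  have hdetCov : (Matrix.of fun i j : Fin n => ∫ ω, X i ω * X j ω ∂μ).det = c.det := by
    rw [hCov, Matrix.det_mul, Matrix.det_mul, Matrix.det_transpose, hdetL]
    ring
  -- the correlation matrix
  set M : Matrix (Fin n) (Fin n) ℝ :=
    Matrix.of fun i j : Fin n => c i j / (σ i * σ j) with hM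
  have hMdiag : ∀ i, M i i = 1 := by
    intro i
    simp only [hM, Matrix.of_apply]
    rw [hcd i, hσsq i, div_self (hdpos i).ne']
  have hMform : ∀ x : Fin n → ℝ,
      x ⬝ᵥ M *ᵥ x = (fun i => x i / σ i) ⬝ᵥ c *ᵥ (fun i => x i / σ i) := by
    intro x
    simp only [dotProduct, Matrix.mulVec, hM, Matrix.of_apply]
    refine Finset.sum_congr rfl fun i _ => ?_
    rw [Finset.mul_sum, Finset.mul_sum]
    refine Finset.sum_congr rfl fun j _ => ?_
    field_simp
  have hMpsd : M.PosSemidef := by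
    refine Matrix.PosSemidef.of_dotProduct_mulVec_nonneg ?_ fun x => ?_
    · rw [Matrix.IsHermitian]
      ext i j
      simp only [Matrix.conjTranspose_apply, hM, Matrix.of_apply, star_trivial]
      have hcs : c j i = c i j := by
        have h1 := congrFun (congrFun hcsymm i) j
        simpa using h1
      rw [hcs, mul_comm (σ j)]
    · have hsx : star x = x := funext fun i => rfl
      rw [hsx, hMform x, ← hq]
      exact integral_nonneg fun ω => sq_nonneg _
  -- determinant relation
  have hcDMD : c = Matrix.diagonal σ * M * Matrix.diagonal σ := by
    ext i j
    rw [Matrix.mul_diagonal, Matrix.diagonal_mul]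
    simp only [hM, Matrix.of_apply]
    field_simp [(hσpos' i).ne', (hσpos' j).ne']
  have hdetc : c.det = (∏ i, d i) * M.det := by
    rw [hcDMD, Matrix.det_mul, Matrix.det_mul, Matrix.det_diagonal]
    have hpd : ∏ i, d i = (∏ i, σ i) * (∏ i, σ i) := by
      rw [← Finset.prod_mul_distrib]
      exact Finset.prod_congr rfl fun i _ => (hσsq i).symm
    rw [hpd]
    ring
  -- translation of sums and products
  have hsum1 : ∑ j ∈ Finset.range n, a j ^ 2 * variance (Y j) μ
      = ∑ i : Fin n, (a i * σ i) ^ 2 := by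
    rw [← Fin.sum_univ_eq_sum_range (fun j => a j ^ 2 * variance (Y j) μ) n]
    refine Finset.sum_congr rfl fun i _ => ?_
    rw [mul_pow, pow_two (σ i), hσsq i, hd]
  have hprod1 : ∏ j ∈ Finset.range n, variance (Y j) μ = ∏ i, d i :=
    (Fin.prod_univ_eq_prod_range (fun j => variance (Y j) μ) n).symm
  -- the variance of the linear combination
  have hS2 : variance (fun ω => ∑ j ∈ Finset.range n, a j * Y j ω) μ
      = (fun i : Fin n => a i) ⬝ᵥ c *ᵥ (fun i : Fin n => a i) := by
    have hSL2 : MemLp (fun ω => ∑ j ∈ Finset.range n, a j * Y j ω) 2 μ :=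
      memLp_finset_sum _ (fun j _ => (hYL2 j).const_mul (a j))
    have hSmean : ∫ ω, (∑ j ∈ Finset.range n, a j * Y j ω) ∂μ = 0 := by
      rw [integral_finset_sum _ (fun j _ => ((hYL2 j).integrable one_le_two).const_mul (a j))]
      simp [integral_const_mul, hYmean]
    rw [variance_eq_sub hSL2, hSmean]
    have hps : (fun ω => ∑ j ∈ Finset.range n, a j * Y j ω) ^ 2
        = fun ω => (∑ i : Fin n, a i * Y i ω) ^ 2 := by
      funext ω
      rw [Pi.pow_apply, Fin.sum_univ_eq_sum_range (fun j => a j * Y j ω) n]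
    rw [hps, hq (fun i => a i)]
    norm_num
  -- put everything together
  have key := corr_quadform_lower hn hMpsd hMdiag (fun i => a i * σ i)
  have hvv : (fun i : Fin n => (a i * σ i) / σ i) = fun i : Fin n => a i :=
    funext fun i => mul_div_cancel_right₀ _ (hσpos' i).ne'
  rw [hMform] at key
  rw [hvv] at key
  rw [ge_iff_le, hdetCov, hS2, hsum1, hprod1, hdetc]
  have hfrac : (∏ i, d i) * M.det / ((n : ℝ) * ∏ i, d i) = M.det / n := by
    rw [mul_comm ((n : ℝ)) (∏ i, d i),
      mul_div_mul_left _ _ (Finset.prod_pos (fun i _ => hdpos i)).ne']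
  rw [hfrac]
  exact key
end

section
/- Let f : ℝ → ℝ be smooth and g : ℝ^d → ℝ smooth in a neighborhood of x. Then ∂_{x_1} ⋯ ∂_{x_d} f(g(x)) = ∑_{P ∈ P{1,...,d}} f^{(#P)}(g(x)) ∏_{B ∈ P} g^{(B)}(x), where the sum runs over all set partitions P of {1,...,d}, #P is the number of blocks of P, and g^{(B)}(x) = ∂_{x_{i_1}} ⋯ ∂_{x_{i_n}} g(x) for B = {i_1,...,i_n}. -/
open Finset

/-- Partial derivative of `g : ℝ^d → ℝ` in the `i`-th coordinate direction. -/
noncomputable def partialDerivAlong {d : ℕ} (i : Fin d) (g : (Fin d → ℝ) → ℝ) :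
    (Fin d → ℝ) → ℝ :=
  fun x => fderiv ℝ g x (Pi.single i 1)

/-- Iterated mixed partial derivative along a list of coordinates. -/
noncomputable def mixedPartial {d : ℕ} (l : List (Fin d)) (g : (Fin d → ℝ) → ℝ) :
    (Fin d → ℝ) → ℝ :=
  l.foldr partialDerivAlong g

open scoped ContDiff

variable {d : ℕ} {U : Set (Fin d → ℝ)}

theorem ContDiffOn.partialDerivAlong {F : (Fin d → ℝ) → ℝ} (hF : ContDiffOn ℝ ∞ F U)
    (hU : IsOpen U) (i : Fin d) : ContDiffOn ℝ ∞ (partialDerivAlong i F) U := by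
  have h1 : ContDiffOn ℝ ∞ (fderiv ℝ F) U :=
    hF.fderiv_of_isOpen hU (m := ∞) (by simp)
  exact h1.clm_apply contDiffOn_const

theorem ContDiffOn.mixedPartial {F : (Fin d → ℝ) → ℝ} (hF : ContDiffOn ℝ ∞ F U)
    (hU : IsOpen U) (l : List (Fin d)) : ContDiffOn ℝ ∞ (mixedPartial l F) U := by
  induction l with
  | nil => exact hF
  | cons i t ih => exact ih.partialDerivAlong hU i

theorem partialDerivAlong_congr {F G : (Fin d → ℝ) → ℝ} (hU : IsOpen U)
    (h : ∀ y ∈ U, F y = G y) {x : (Fin d → ℝ)} (hx : x ∈ U) (i : Fin d) :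
    partialDerivAlong i F x = partialDerivAlong i G x := by
  have : F =ᶠ[nhds x] G := Filter.eventuallyEq_of_mem (hU.mem_nhds hx) h
  simp only [partialDerivAlong, this.fderiv_eq]

theorem mixedPartial_congr {F G : (Fin d → ℝ) → ℝ} (hU : IsOpen U)
    (h : ∀ y ∈ U, F y = G y) (l : List (Fin d)) :
    ∀ y ∈ U, mixedPartial l F y = mixedPartial l G y := by
  induction l with
  | nil => exact h
  | cons i t ih =>
    intro y hy
    exact partialDerivAlong_congr hU ih hy i

theorem partialDerivAlong_swap {F : (Fin d → ℝ) → ℝ} (hF : ContDiffOn ℝ ∞ F U)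
    (hU : IsOpen U) {x : (Fin d → ℝ)} (hx : x ∈ U) (i j : Fin d) :
    partialDerivAlong i (partialDerivAlong j F) x
      = partialDerivAlong j (partialDerivAlong i F) x := by
  have hdF : DifferentiableAt ℝ (fderiv ℝ F) x :=
    ((hF.fderiv_of_isOpen hU (m := ∞) (by simp)).differentiableOn
      (by simp)).differentiableAt (hU.mem_nhds hx)
  have key : ∀ v w : Fin d → ℝ,
      fderiv ℝ (fun y => fderiv ℝ F y w) x v = fderiv ℝ (fderiv ℝ F) x v w := by
    intro v w
    rw [fderiv_clm_apply hdF (differentiableAt_const _)]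
    simp
  have hsymm : IsSymmSndFDerivAt ℝ F x :=
    ((hF x hx).contDiffAt (hU.mem_nhds hx)).isSymmSndFDerivAt
      (by rw [minSmoothness_of_isRCLikeNormedField]; exact WithTop.coe_le_coe.2 le_top)
  show fderiv ℝ (fun y => fderiv ℝ F y (Pi.single j 1)) x (Pi.single i 1)
      = fderiv ℝ (fun y => fderiv ℝ F y (Pi.single i 1)) x (Pi.single j 1)
  rw [key, key, hsymm]

theorem mixedPartial_perm {F : (Fin d → ℝ) → ℝ} (hF : ContDiffOn ℝ ∞ F U)
    (hU : IsOpen U) {l l' : List (Fin d)} (hp : l.Perm l') :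
    ∀ y ∈ U, mixedPartial l F y = mixedPartial l' F y := by
  induction hp with
  | nil => intro y _; rfl
  | cons a h ih => intro y hy; exact partialDerivAlong_congr hU ih hy a
  | swap a b t =>
    intro y hy
    exact partialDerivAlong_swap (hF.mixedPartial hU t) hU hy b a
  | trans h1 h2 ih1 ih2 => intro y hy; rw [ih1 y hy, ih2 y hy]


variable {g : (Fin d → ℝ) → ℝ} {f : ℝ → ℝ} {x : Fin d → ℝ}

theorem hasFDerivAt_of_contDiffOn {F : (Fin d → ℝ) → ℝ} (hF : ContDiffOn ℝ ∞ F U)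
    (hU : IsOpen U) (hx : x ∈ U) : HasFDerivAt F (fderiv ℝ F x) x :=
  (((hF.differentiableOn (by simp)) x hx).differentiableAt
    (hU.mem_nhds hx)).hasFDerivAt


theorem term_hasFDerivAt (hf : ContDiff ℝ ∞ f) (hg : ContDiffOn ℝ ∞ g U)
    (hU : IsOpen U) (hx : x ∈ U) (n : ℕ) (t : Finset (Finset (Fin d))) :
    HasFDerivAt (fun y => iteratedDeriv n f (g y) * ∏ B ∈ t, mixedPartial (B.sort (· ≤ ·)) g y)
      (((∏ B ∈ t, mixedPartial (B.sort (· ≤ ·)) g x) * iteratedDeriv (n+1) f (g x)) • fderiv ℝ g x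
        + iteratedDeriv n f (g x) •
          ∑ B ∈ t, (∏ C ∈ t.erase B, mixedPartial (C.sort (· ≤ ·)) g x) •
            fderiv ℝ (mixedPartial (B.sort (· ≤ ·)) g) x) x := by
  have hgd := hasFDerivAt_of_contDiffOn hg hU hx
  have hitd : ∀ m : ℕ, ContDiff ℝ ∞ (iteratedDeriv m f) := by
    intro m; rw [iteratedDeriv_eq_iterate]; exact hf.iterate_deriv m
  have hfn : HasDerivAt (iteratedDeriv n f) (iteratedDeriv (n+1) f (g x)) (g x) := by
    rw [iteratedDeriv_succ]
    exact (((hitd n).differentiable (by simp)) (g x)).hasDerivAt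
  have h1 : HasFDerivAt (fun y => iteratedDeriv n f (g y))
      (iteratedDeriv (n+1) f (g x) • fderiv ℝ g x) x := hfn.comp_hasFDerivAt x hgd
  have h2 : HasFDerivAt (fun y => ∏ B ∈ t, mixedPartial (B.sort (· ≤ ·)) g y)
      (∑ B ∈ t, (∏ C ∈ t.erase B, mixedPartial (C.sort (· ≤ ·)) g x) •
        fderiv ℝ (mixedPartial (B.sort (· ≤ ·)) g) x) x :=
    HasFDerivAt.finset_prod fun B _ =>
      hasFDerivAt_of_contDiffOn (hg.mixedPartial hU _) hU hx
  have := h1.mul h2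
  rw [add_comm, smul_smul] at this
  exact this

section Comb
variable {α : Type*} [DecidableEq α] {i : α} {s : Finset α}

namespace Faa

theorem subset_of_mem_insert_empty {P : Finpartition s} {B : Finset α}
    (hB : B ∈ insert ∅ P.parts) : B ⊆ s := by
  rcases mem_insert.1 hB with h | h
  · simp [h]
  · exact P.le h

/-- Extend a finpartition of `s` to one of `insert i s` by adding `i` to the block `B`
(where `B = ∅` encodes adding `{i}` as a new block). -/
def extendPart (P : Finpartition s) (hi : i ∉ s) (B : Finset α)
    (hB : B ∈ insert ∅ P.parts) : Finpartition (insert i s) where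
  parts := insert (insert i B) (P.parts.erase B)
  supIndep := by
    rw [supIndep_iff_pairwiseDisjoint, coe_insert]
    refine (P.disjoint.subset (coe_subset.2 (erase_subset _ _))).insert ?_
    intro C hC _
    simp only [mem_coe, mem_erase] at hC
    have hCs : C ⊆ s := P.le hC.2
    have hiC : i ∉ C := fun h => hi (hCs h)
    have hBC : Disjoint B C := by
      rcases mem_insert.1 hB with h | h
      · simp [h]
      · exact P.disjoint h hC.2 (Ne.symm hC.1)
    simp only [id]
    rw [Finset.disjoint_insert_left]
    exact ⟨hiC, hBC⟩
  sup_parts := by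
    rw [sup_insert]
    have hsup : B ∪ (P.parts.erase B).sup id = s := by
      rcases mem_insert.1 hB with h | h
      · subst h
        rw [erase_eq_of_notMem (by simpa using P.bot_notMem), empty_union]
        exact P.sup_parts
      · conv_rhs => rw [← P.sup_parts, ← insert_erase h, sup_insert]
        rfl
    show insert i B ⊔ _ = insert i s
    rw [sup_eq_union, insert_union, hsup]
  bot_notMem := by
    simp only [bot_eq_empty, mem_insert, not_or]
    refine ⟨fun h => ?_, fun h => P.bot_notMem (mem_of_mem_erase h)⟩
    exact (insert_ne_empty i B) h.symm

theorem extendPart_parts (P : Finpartition s) (hi : i ∉ s) (B : Finset α)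
    (hB : B ∈ insert ∅ P.parts) :
    (extendPart P hi B hB).parts = insert (insert i B) (P.parts.erase B) := rfl

theorem insert_not_mem_erase (P : Finpartition s) (hi : i ∉ s) (B : Finset α) :
    insert i B ∉ P.parts.erase B := by
  intro h
  exact hi (P.le (mem_of_mem_erase h) (mem_insert_self i B))

/-- Restrict a finpartition of `insert i s` to one of `s` by deleting `i`. -/
def restrictAway (Q : Finpartition (insert i s)) (hi : i ∉ s) : Finpartition s :=
  (Q.avoid {i}).copy (by rw [insert_sdiff_of_mem _ (mem_singleton_self i),
    sdiff_singleton_eq_erase, erase_eq_of_notMem hi])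

theorem mem_restrictAway {Q : Finpartition (insert i s)} {hi : i ∉ s} {D : Finset α} :
    D ∈ (restrictAway Q hi).parts ↔ ∃ E ∈ Q.parts, ¬E ⊆ {i} ∧ E \ {i} = D := by
  simp only [restrictAway, Finpartition.copy_parts, Finpartition.mem_avoid, le_eq_subset]

end Faa

namespace Faa

theorem part_i_mem (Q : Finpartition (insert i s)) : i ∈ Q.part i :=
  Q.mem_part (mem_insert_self i s)

/-- Reconstruction: erasing the `i`-block of the restriction recovers `Q.parts.erase (Q.part i)`. -/
theorem restrictAway_erase (Q : Finpartition (insert i s)) (hi : i ∉ s) :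
    (restrictAway Q hi).parts.erase (Q.part i \ {i}) = Q.parts.erase (Q.part i) := by
  have hC : Q.part i ∈ Q.parts := Q.part_mem.2 (mem_insert_self i s)
  ext D
  simp only [mem_erase, mem_restrictAway]
  constructor
  · rintro ⟨hne, E, hE, hEi, rfl⟩
    have hEC : E ≠ Q.part i := by
      rintro rfl; exact hne rfl
    have hiE : i ∉ E := by
      intro h
      exact hEC (Q.eq_of_mem_parts hE hC h (part_i_mem Q))
    rw [sdiff_singleton_eq_erase, erase_eq_of_notMem hiE]
    exact ⟨hEC, hE⟩
  · rintro ⟨hne, hD⟩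
    have hiD : i ∉ D := by
      intro h
      exact hne (Q.eq_of_mem_parts hD hC h (part_i_mem Q))
    refine ⟨?_, D, hD, ?_, ?_⟩
    · intro h
      have hsub : D ⊆ Q.part i := by
        rw [h]; exact sdiff_subset
      have hdisj : Disjoint D (Q.part i) := Q.disjoint hD hC hne
      have hDne : D.Nonempty := Q.nonempty_of_mem_parts hD
      exact hDne.ne_empty (hdisj.eq_bot_of_le hsub)
    · intro h
      obtain ⟨a, ha⟩ := Q.nonempty_of_mem_parts hD
      have := h ha
      simp only [mem_singleton] at this
      exact hiD (this ▸ ha)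
    · rw [sdiff_singleton_eq_erase, erase_eq_of_notMem hiD]

theorem part_sdiff_mem (Q : Finpartition (insert i s)) (hi : i ∉ s) :
    Q.part i \ {i} ∈ insert ∅ (restrictAway Q hi).parts := by
  have hC : Q.part i ∈ Q.parts := Q.part_mem.2 (mem_insert_self i s)
  by_cases h : Q.part i \ {i} = ∅
  · rw [h]; exact mem_insert_self _ _
  · refine mem_insert_of_mem (mem_restrictAway.2 ⟨Q.part i, hC, ?_, rfl⟩)
    intro hsub
    exact h (sdiff_eq_empty_iff_subset.2 (by simpa using hsub))

/-- Left inverse: extending the restriction recovers `Q`. -/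
theorem extendPart_restrictAway (Q : Finpartition (insert i s)) (hi : i ∉ s) :
    extendPart (restrictAway Q hi) hi (Q.part i \ {i}) (part_sdiff_mem Q hi) = Q := by
  have hC : Q.part i ∈ Q.parts := Q.part_mem.2 (mem_insert_self i s)
  apply Finpartition.ext
  rw [extendPart_parts, restrictAway_erase Q hi]
  have : insert i (Q.part i \ {i}) = Q.part i := by
    rw [sdiff_singleton_eq_erase, insert_erase (part_i_mem Q)]
  rw [this, insert_erase hC]

end Faa

namespace Faa

theorem part_extendPart (P : Finpartition s) (hi : i ∉ s) (B : Finset α)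
    (hB : B ∈ insert ∅ P.parts) : (extendPart P hi B hB).part i = insert i B :=
  Finpartition.part_eq_of_mem _ (mem_insert_self _ _) (mem_insert_self i B)

theorem not_mem_of_mem_insert_empty (P : Finpartition s) (hi : i ∉ s) {B : Finset α}
    (hB : B ∈ insert ∅ P.parts) : i ∉ B := by
  intro h
  exact hi (subset_of_mem_insert_empty hB h)

theorem part_extendPart_sdiff (P : Finpartition s) (hi : i ∉ s) (B : Finset α)
    (hB : B ∈ insert ∅ P.parts) : (extendPart P hi B hB).part i \ {i} = B := by
  rw [part_extendPart, sdiff_singleton_eq_erase, erase_insert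
    (not_mem_of_mem_insert_empty P hi hB)]

theorem restrictAway_extendPart (P : Finpartition s) (hi : i ∉ s) (B : Finset α)
    (hB : B ∈ insert ∅ P.parts) : restrictAway (extendPart P hi B hB) hi = P := by
  apply Finpartition.ext
  ext D
  rw [mem_restrictAway]
  constructor
  · rintro ⟨E, hE, hEi, rfl⟩
    rw [extendPart_parts, mem_insert] at hE
    rcases hE with rfl | hE
    · have hBne : B ≠ ∅ := by
        intro h
        subst h
        exact hEi (by simp)
      have hBmem : B ∈ P.parts := (mem_insert.1 hB).resolve_left hBne
      rwa [sdiff_singleton_eq_erase, erase_insert (not_mem_of_mem_insert_empty P hi hB)]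
    · have hDs : E ∈ P.parts := mem_of_mem_erase hE
      have hiE : i ∉ E := fun h => hi (P.le hDs h)
      rwa [sdiff_singleton_eq_erase, erase_eq_of_notMem hiE]
  · intro hD
    have hiD : i ∉ D := fun h => hi (P.le hD h)
    by_cases hDB : D = B
    · subst hDB
      refine ⟨insert i D, by rw [extendPart_parts]; exact mem_insert_self _ _, ?_, ?_⟩
      · intro hsub
        obtain ⟨a, ha⟩ := P.nonempty_of_mem_parts hD
        have := hsub (mem_insert_of_mem ha)
        rw [mem_singleton] at this
        exact hiD (this ▸ ha)
      · rw [sdiff_singleton_eq_erase, erase_insert hiD]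
    · refine ⟨D, by rw [extendPart_parts]; exact mem_insert_of_mem (mem_erase.2 ⟨hDB, hD⟩), ?_, ?_⟩
      · intro hsub
        obtain ⟨a, ha⟩ := P.nonempty_of_mem_parts hD
        have := hsub ha
        rw [mem_singleton] at this
        exact hiD (this ▸ ha)
      · rw [sdiff_singleton_eq_erase, erase_eq_of_notMem hiD]

/-- The key sum bijection over finpartitions of `insert i s`. -/
theorem sum_finpartition_insert (hi : i ∉ s) (T : Finset (Finset α) → ℝ) :
    ∑ Q : Finpartition (insert i s), T Q.parts
      = ∑ P : Finpartition s, ∑ B ∈ insert ∅ P.parts,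
          T (insert (insert i B) (P.parts.erase B)) := by
  classical
  rw [← Finset.sum_sigma (univ : Finset (Finpartition s)) (fun P => insert ∅ P.parts)
    (fun p => T (insert (insert i p.2) (p.1.parts.erase p.2)))]
  refine Finset.sum_bij' (fun Q _ => (⟨restrictAway Q hi, Q.part i \ {i}⟩ :
      (_ : Finpartition s) × Finset α))
    (fun p hp => extendPart p.1 hi p.2 (by simpa using (Finset.mem_sigma.1 hp).2))
    ?_ ?_ ?_ ?_ ?_
  · intro Q hQ
    exact Finset.mem_sigma.2 ⟨mem_univ _, part_sdiff_mem Q hi⟩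
  · intro p hp
    exact mem_univ _
  · intro Q hQ
    exact extendPart_restrictAway Q hi
  · intro p hp
    have h1 := restrictAway_extendPart p.1 hi p.2 (by simpa using (Finset.mem_sigma.1 hp).2)
    have h2 := part_extendPart_sdiff p.1 hi p.2 (by simpa using (Finset.mem_sigma.1 hp).2)
    exact Sigma.ext h1 (by simp only; rw [h2])
  · intro Q hQ
    show T Q.parts = T (insert (insert i (Q.part i \ {i})) ((restrictAway Q hi).parts.erase (Q.part i \ {i})))
    rw [restrictAway_erase Q hi, sdiff_singleton_eq_erase, insert_erase (part_i_mem Q),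
      insert_erase (Q.part_mem.2 (mem_insert_self i s))]

end Faa

end Comb

namespace Faa

variable {d : ℕ} {U : Set (Fin d → ℝ)} {g : (Fin d → ℝ) → ℝ} {f : ℝ → ℝ} {x : Fin d → ℝ}

theorem sum_finpartition_congr {α : Type*} [DecidableEq α] {s s' : Finset α} (h : s = s')
    (T : Finset (Finset α) → ℝ) :
    ∑ Q : Finpartition s, T Q.parts = ∑ Q : Finpartition s', T Q.parts := by
  subst h; rfl

theorem sort_insert_perm {i : Fin d} {B : Finset (Fin d)} (hiB : i ∉ B) :
    ((insert i B).sort (· ≤ ·)).Perm (i :: B.sort (· ≤ ·)) := by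
  refine (Finset.sort_perm_toList _ _).trans ?_
  refine (Finset.toList_insert hiB).trans ?_
  exact List.Perm.cons i (Finset.sort_perm_toList _ _).symm

theorem mixed_sort_insert (hg : ContDiffOn ℝ ∞ g U) (hU : IsOpen U) (hx : x ∈ U)
    {i : Fin d} {B : Finset (Fin d)} (hiB : i ∉ B) :
    mixedPartial ((insert i B).sort (· ≤ ·)) g x
      = partialDerivAlong i (mixedPartial (B.sort (· ≤ ·)) g) x :=
  mixedPartial_perm hg hU (sort_insert_perm hiB) x hx

theorem deriv_sum_eval (hf : ContDiff ℝ ∞ f) (hg : ContDiffOn ℝ ∞ g U)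
    (hU : IsOpen U) (hx : x ∈ U) (i : Fin d) (s : Finset (Fin d)) :
    partialDerivAlong i (fun y => ∑ P : Finpartition s,
        iteratedDeriv P.parts.card f (g y) * ∏ B ∈ P.parts, mixedPartial (B.sort (· ≤ ·)) g y) x
      = ∑ P : Finpartition s,
          (iteratedDeriv (P.parts.card + 1) f (g x) * (partialDerivAlong i g x *
              ∏ B ∈ P.parts, mixedPartial (B.sort (· ≤ ·)) g x)
            + iteratedDeriv P.parts.card f (g x) *
              ∑ B ∈ P.parts, partialDerivAlong i (mixedPartial (B.sort (· ≤ ·)) g) x *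
                ∏ C ∈ P.parts.erase B, mixedPartial (C.sort (· ≤ ·)) g x) := by
  have hsum : HasFDerivAt (fun y => ∑ P : Finpartition s,
      iteratedDeriv P.parts.card f (g y) * ∏ B ∈ P.parts, mixedPartial (B.sort (· ≤ ·)) g y)
      (∑ P : Finpartition s,
        (((∏ B ∈ P.parts, mixedPartial (B.sort (· ≤ ·)) g x) *
            iteratedDeriv (P.parts.card + 1) f (g x)) • fderiv ℝ g x
          + iteratedDeriv P.parts.card f (g x) •
            ∑ B ∈ P.parts, (∏ C ∈ P.parts.erase B, mixedPartial (C.sort (· ≤ ·)) g x) •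
              fderiv ℝ (mixedPartial (B.sort (· ≤ ·)) g) x)) x :=
    HasFDerivAt.fun_sum fun P _ => term_hasFDerivAt hf hg hU hx P.parts.card P.parts
  show fderiv ℝ _ x (Pi.single i 1) = _
  rw [hsum.fderiv]
  simp only [ContinuousLinearMap.sum_apply, ContinuousLinearMap.add_apply,
    ContinuousLinearMap.smul_apply, smul_eq_mul, partialDerivAlong]
  refine Finset.sum_congr rfl fun P _ => ?_
  have hswap : (∑ B ∈ P.parts, (∏ C ∈ P.parts.erase B, mixedPartial (C.sort (· ≤ ·)) g x) *
        fderiv ℝ (mixedPartial (B.sort (· ≤ ·)) g) x (Pi.single i 1))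
      = ∑ B ∈ P.parts, fderiv ℝ (mixedPartial (B.sort (· ≤ ·)) g) x (Pi.single i 1) *
          ∏ C ∈ P.parts.erase B, mixedPartial (C.sort (· ≤ ·)) g x :=
    Finset.sum_congr rfl fun B _ => mul_comm _ _
  rw [hswap]
  ring

theorem singleton_not_mem_parts {s : Finset (Fin d)} {i : Fin d} (hi : i ∉ s)
    (P : Finpartition s) : ({i} : Finset (Fin d)) ∉ P.parts := by
  intro h
  exact hi (P.le h (mem_singleton_self i))

theorem main_aux (hU : IsOpen U) (hg : ContDiffOn ℝ ∞ g U) (hf : ContDiff ℝ ∞ f) :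
    ∀ l : List (Fin d), l.Nodup → ∀ x ∈ U,
      mixedPartial l (fun y => f (g y)) x
        = ∑ P : Finpartition l.toFinset,
            iteratedDeriv P.parts.card f (g x) *
              ∏ B ∈ P.parts, mixedPartial (B.sort (· ≤ ·)) g x := by
  intro l
  induction l with
  | nil =>
    intro _ x hx
    haveI : Unique (Finpartition (List.toFinset ([] : List (Fin d)))) :=
      inferInstanceAs (Unique (Finpartition (⊥ : Finset (Fin d))))
    rw [Finset.univ_unique, Finset.sum_singleton]
    have hparts : (default : Finpartition (List.toFinset ([] : List (Fin d)))).parts = ∅ :=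
      Finpartition.parts_eq_empty_iff.2 rfl
    rw [hparts]
    simp [mixedPartial, iteratedDeriv_zero]
  | cons i t ih =>
    intro hl x hx
    have hnd := List.nodup_cons.1 hl
    have hit : i ∉ t.toFinset := by simpa using hnd.1
    -- left-hand side
    have e2 : mixedPartial (i :: t) (fun y => f (g y)) x
        = partialDerivAlong i (fun y => ∑ P : Finpartition t.toFinset,
            iteratedDeriv P.parts.card f (g y) *
              ∏ B ∈ P.parts, mixedPartial (B.sort (· ≤ ·)) g y) x :=
      partialDerivAlong_congr hU (fun y hy => ih hnd.2 y hy) hx i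
    rw [e2, deriv_sum_eval hf hg hU hx i t.toFinset]
    -- right-hand side
    have hrhs : (∑ P : Finpartition ((i :: t).toFinset),
          iteratedDeriv P.parts.card f (g x) *
            ∏ B ∈ P.parts, mixedPartial (B.sort (· ≤ ·)) g x)
        = ∑ P : Finpartition t.toFinset, ∑ B ∈ insert ∅ P.parts,
            (fun u : Finset (Finset (Fin d)) => iteratedDeriv u.card f (g x) *
              ∏ C ∈ u, mixedPartial (C.sort (· ≤ ·)) g x)
            (insert (insert i B) (P.parts.erase B)) :=
      (sum_finpartition_congr (List.toFinset_cons)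
          (fun u : Finset (Finset (Fin d)) => iteratedDeriv u.card f (g x) *
            ∏ C ∈ u, mixedPartial (C.sort (· ≤ ·)) g x)).trans
        (sum_finpartition_insert hit
          (fun u : Finset (Finset (Fin d)) => iteratedDeriv u.card f (g x) *
            ∏ C ∈ u, mixedPartial (C.sort (· ≤ ·)) g x))
    rw [hrhs]
    refine Finset.sum_congr rfl fun P _ => ?_
    have hempty : (∅ : Finset (Fin d)) ∉ P.parts := by simpa using P.bot_notMem
    rw [Finset.sum_insert hempty]
    beta_reduce
    have hsing : insert i (∅ : Finset (Fin d)) = {i} := rfl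
    congr 1
    · -- singleton block term
      rw [erase_eq_of_notMem hempty, hsing]
      have hnm : ({i} : Finset (Fin d)) ∉ P.parts := singleton_not_mem_parts hit P
      rw [Finset.card_insert_of_notMem hnm, Finset.prod_insert hnm]
      have : mixedPartial (({i} : Finset (Fin d)).sort (· ≤ ·)) g x
          = partialDerivAlong i g x := by
        rw [Finset.sort_singleton]
        rfl
      rw [this]
    · -- extended block terms
      rw [Finset.mul_sum]
      refine Finset.sum_congr rfl fun B hB => ?_
      have hiB : i ∉ B := fun h => hit (P.le hB h)
      have hnm := insert_not_mem_erase P hit B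
      rw [Finset.card_insert_of_notMem hnm, Finset.prod_insert hnm,
        Finset.card_erase_of_mem hB,
        Nat.sub_add_cancel (Nat.one_le_iff_ne_zero.2 (Finset.card_ne_zero_of_mem hB)),
        mixed_sort_insert hg hU hx hiB]

end Faa


/-- **Multivariate combinatorial Faà di Bruno formula.** For `f : ℝ → ℝ` smooth and
`g : ℝ^d → ℝ` smooth in a neighborhood of `x`,
`∂_{x_1} ⋯ ∂_{x_d} f(g(x)) = ∑_{P} f^{(#P)}(g(x)) ∏_{B ∈ P} g^{(B)}(x)`,
the sum over all set partitions `P` of `{1,…,d}`. -/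
theorem faa_di_bruno_combinatorial
    (d : ℕ) (f : ℝ → ℝ) (hf : ContDiff ℝ (⊤ : ℕ∞) f)
    (g : (Fin d → ℝ) → ℝ) (x : Fin d → ℝ)
    (hg : ∃ U : Set (Fin d → ℝ), IsOpen U ∧ x ∈ U ∧ ContDiffOn ℝ (⊤ : ℕ∞) g U) :
    mixedPartial (List.finRange d) (fun y => f (g y)) x =
      ∑ P : Finpartition (Finset.univ : Finset (Fin d)),
        iteratedDeriv P.parts.card f (g x) *
          ∏ B ∈ P.parts, mixedPartial (B.sort (· ≤ ·)) g x := by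
  obtain ⟨U, hU, hx, hgU⟩ := hg
  have h1 := Faa.main_aux hU (hgU.of_le (by simp)) (hf.of_le (by simp))
    (List.finRange d) (List.nodup_finRange d) x hx
  rw [h1]
  exact Faa.sum_finpartition_congr (List.toFinset_finRange d)
    (fun u => iteratedDeriv u.card f (g x) * ∏ B ∈ u, mixedPartial (B.sort (· ≤ ·)) g x)
end

section
/- Let G : ℝ^n → ℂ be continuously differentiable, λ ≠ 0, ε_j ∈ ℤ \ {0}, and consider the iterated integral I = ∫_{0 ≤ u_1 < ... < u_n ≤ T} e^{−2πiλ ∑_k ε_k u_k} G(u) du over the simplex. Then integrating by parts in the variable u_j (with neighbors u_{j−1}, u_{j+1}) gives I = (1/(2πiλε_j)) (I⁻ − I⁺ + I_∂), where I⁻ is the integral over the simplex with u_j set equal to u_{j−1} (and ε_{j−1} replaced by ε_{j−1}+ε_j), I⁺ is the analogous integral with u_j set equal to u_{j+1} (and ε_{j+1} replaced by ε_{j+1}+ε_j), and I_∂ is the same simplex integral with G replaced by ∂_{u_j}G. -/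
open MeasureTheory Finset

namespace SimplexIBPAux
noncomputable section

def simplexSet (n : ℕ) (T : ℝ) : Set (Fin n → ℝ) :=
  {u | (∀ k, 0 ≤ u k ∧ u k ≤ T) ∧ StrictMono u}

lemma measurableSet_simplexSet (n : ℕ) (T : ℝ) : MeasurableSet (simplexSet n T) := by
  have : simplexSet n T =
      (⋂ k, {u : Fin n → ℝ | 0 ≤ u k ∧ u k ≤ T}) ∩
        ⋂ (p) (q) (_ : p < q), {u : Fin n → ℝ | u p < u q} := by
    ext u
    simp only [simplexSet, Set.mem_setOf_eq, Set.mem_inter_iff, Set.mem_iInter, StrictMono]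
    try tauto
  rw [this]
  refine (MeasurableSet.iInter fun k => ?_).inter
    (MeasurableSet.iInter fun p => MeasurableSet.iInter fun q => MeasurableSet.iInter fun _ => ?_)
  · exact (measurableSet_le measurable_const (measurable_pi_apply k)).inter
      (measurableSet_le (measurable_pi_apply k) measurable_const)
  · exact measurableSet_lt (measurable_pi_apply p) (measurable_pi_apply q)

lemma simplexSet_subset_Icc (n : ℕ) (T : ℝ) :
    simplexSet n T ⊆ Set.Icc (fun _ => 0) (fun _ => T) := by
  rintro u ⟨hb, -⟩
  exact ⟨fun k => (hb k).1, fun k => (hb k).2⟩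

lemma integrable_indicator_simplexSet {n : ℕ} (T : ℝ) {f : (Fin n → ℝ) → ℂ}
    (hf : Continuous f) : Integrable ((simplexSet n T).indicator f) := by
  rw [integrable_indicator_iff (measurableSet_simplexSet n T)]
  exact (hf.continuousOn.integrableOn_compact isCompact_Icc).mono_set
    (simplexSet_subset_Icc n T)

lemma mem_of_insertNth_mem {m : ℕ} {T : ℝ} {j : Fin (m + 1)} {t : ℝ} {v : Fin m → ℝ}
    (h : j.insertNth t v ∈ simplexSet (m + 1) T) : v ∈ simplexSet m T := by
  obtain ⟨hb, hmono⟩ := h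
  constructor
  · intro k
    have := hb (j.succAbove k)
    rwa [Fin.insertNth_apply_succAbove] at this
  · intro p q hpq
    have := hmono (Fin.strictMono_succAbove j hpq)
    rwa [Fin.insertNth_apply_succAbove, Fin.insertNth_apply_succAbove] at this

variable {m : ℕ} {T : ℝ} (j : Fin (m + 1))

def lowNb (T : ℝ) (j : Fin (m + 1)) (v : Fin m → ℝ) : ℝ :=
  if h : 0 < j.val then v ⟨j.val - 1, Nat.sub_one_lt_of_le h (Nat.lt_succ_iff.mp j.isLt)⟩ else 0

def upNb (T : ℝ) (j : Fin (m + 1)) (v : Fin m → ℝ) : ℝ :=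
  if h : j.val < m then v ⟨j.val, h⟩ else T

variable {j}

lemma lowNb_nonneg {v : Fin m → ℝ} (hv : v ∈ simplexSet m T) : 0 ≤ lowNb T j v := by
  unfold lowNb; split
  · exact (hv.1 _).1
  · exact le_rfl

lemma upNb_le {v : Fin m → ℝ} (hv : v ∈ simplexSet m T) (hT : 0 ≤ T) : upNb T j v ≤ T := by
  unfold upNb; split
  · exact (hv.1 _).2
  · exact le_rfl

lemma lowNb_le_upNb {v : Fin m → ℝ} (hv : v ∈ simplexSet m T) (hT : 0 ≤ T) :
    lowNb T j v ≤ upNb T j v := by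
  obtain ⟨hb, hmono⟩ := hv
  unfold lowNb upNb
  split <;> split
  · exact (hmono (show (⟨j.val - 1, by omega⟩ : Fin m) < ⟨j.val, by omega⟩ by
      simp only [Fin.lt_def, Fin.val_mk]; omega)).le
  · exact (hb _).2
  · exact (hb _).1
  · exact hT

lemma Ioo_subset_insertNth_mem {v : Fin m → ℝ} (hv : v ∈ simplexSet m T) (hT : 0 ≤ T)
    {t : ℝ} (ht : t ∈ Set.Ioo (lowNb T j v) (upNb T j v)) :
    j.insertNth t v ∈ simplexSet (m + 1) T := by
  obtain ⟨hb, hmono⟩ := hv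
  obtain ⟨hta, htb⟩ := ht
  constructor
  · intro k
    rcases eq_or_ne k j with rfl | hk
    · rw [Fin.insertNth_apply_same]
      exact ⟨(lowNb_nonneg ⟨hb, hmono⟩).trans hta.le,
        htb.le.trans (upNb_le ⟨hb, hmono⟩ hT)⟩
    · obtain ⟨i, rfl⟩ := Fin.exists_succAbove_eq hk
      rw [Fin.insertNth_apply_succAbove]
      exact hb i
  · intro p q hpq
    rcases eq_or_ne p j with hpj | hp
    · rw [hpj] at hpq ⊢
      obtain ⟨i, rfl⟩ := Fin.exists_succAbove_eq hpq.ne'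
      rw [Fin.insertNth_apply_same, Fin.insertNth_apply_succAbove]
      have hji : j.val ≤ i.val := by
        have := (Fin.lt_succAbove_iff_le_castSucc j i).1 hpq
        simpa [Fin.le_def] using this
      have hjm : j.val < m := lt_of_le_of_lt hji i.isLt
      have hbv : upNb T j v = v ⟨j.val, hjm⟩ := dif_pos hjm
      calc t < upNb T j v := htb
        _ = v ⟨j.val, hjm⟩ := hbv
        _ ≤ v i := hmono.monotone (by simp [Fin.le_def]; omega)
    · rcases eq_or_ne q j with hqj | hq
      · rw [hqj] at hpq ⊢
        obtain ⟨i, rfl⟩ := Fin.exists_succAbove_eq hp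
        rw [Fin.insertNth_apply_succAbove, Fin.insertNth_apply_same]
        have hij : i.val < j.val := by
          have := (Fin.succAbove_lt_iff_castSucc_lt j i).1 hpq
          simpa [Fin.lt_def] using this
        have hj0 : 0 < j.val := by omega
        have hav : lowNb T j v = v ⟨j.val - 1, by omega⟩ := dif_pos hj0
        calc v i ≤ v ⟨j.val - 1, by omega⟩ := hmono.monotone (by simp [Fin.le_def]; omega)
          _ = lowNb T j v := hav.symm
          _ < t := hta
      · obtain ⟨i, rfl⟩ := Fin.exists_succAbove_eq hp
        obtain ⟨i', rfl⟩ := Fin.exists_succAbove_eq hq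
        rw [Fin.insertNth_apply_succAbove, Fin.insertNth_apply_succAbove]
        exact hmono ((Fin.succAbove_lt_succAbove_iff).1 hpq)

lemma insertNth_mem_subset_Icc {v : Fin m → ℝ} {t : ℝ}
    (h : j.insertNth t v ∈ simplexSet (m + 1) T) :
    t ∈ Set.Icc (lowNb T j v) (upNb T j v) := by
  obtain ⟨hb, hmono⟩ := h
  constructor
  · unfold lowNb; split
    · rename_i hj0
      have hlt : j.succAbove ⟨j.val - 1, by omega⟩ < j := by
        rw [Fin.succAbove_lt_iff_castSucc_lt]
        simp only [Fin.lt_def, Fin.coe_castSucc, Fin.val_mk]; omega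
      have := hmono hlt
      rw [Fin.insertNth_apply_succAbove, Fin.insertNth_apply_same] at this
      exact this.le
    · have := (hb j).1
      rwa [Fin.insertNth_apply_same] at this
  · unfold upNb; split
    · rename_i hjm
      have hlt : j < j.succAbove ⟨j.val, hjm⟩ := by
        rw [Fin.lt_succAbove_iff_le_castSucc]
        simp [Fin.le_def]
      have := hmono hlt
      rw [Fin.insertNth_apply_succAbove, Fin.insertNth_apply_same] at this
      exact this.le
    · have := (hb j).2
      rwa [Fin.insertNth_apply_same] at this

def phase {n : ℕ} (c : ℂ) (ε : Fin n → ℤ) (G : (Fin n → ℝ) → ℂ) (u : Fin n → ℝ) : ℂ :=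
  Complex.exp (-c * ∑ k, (ε k : ℂ) * (u k : ℂ)) * G u

lemma continuous_phase {n : ℕ} (c : ℂ) (ε : Fin n → ℤ) {G : (Fin n → ℝ) → ℂ}
    (hGc : Continuous G) : Continuous (phase c ε G) :=
  (Complex.continuous_exp.comp (continuous_const.mul (continuous_finset_sum _ fun k _ =>
    continuous_const.mul (Complex.continuous_ofReal.comp (continuous_apply k))))).mul hGc

lemma insertNth_eq_affine (v : Fin m → ℝ) :
    ∀ t : ℝ, (j.insertNth t v : Fin (m + 1) → ℝ)
      = (j.insertNth (0 : ℝ) v : Fin (m + 1) → ℝ) + t • (Pi.single j 1 : Fin (m + 1) → ℝ) := by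
  intro t; funext l
  rcases eq_or_ne l j with rfl | hl
  · simp [Fin.insertNth_apply_same]
  · obtain ⟨i, rfl⟩ := Fin.exists_succAbove_eq hl
    simp [Fin.insertNth_apply_succAbove, Pi.single_eq_of_ne (Fin.succAbove_ne j i)]

lemma continuous_insertNth (v : Fin m → ℝ) :
    Continuous fun t : ℝ => (j.insertNth t v : Fin (m + 1) → ℝ) := by
  have heq : (fun t : ℝ => (j.insertNth t v : Fin (m + 1) → ℝ))
      = fun t => (j.insertNth (0 : ℝ) v : Fin (m + 1) → ℝ)
          + t • (Pi.single j 1 : Fin (m + 1) → ℝ) :=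
    funext (insertNth_eq_affine v)
  rw [heq]; exact continuous_const.add (continuous_id.smul continuous_const)

lemma hasDerivAt_G_insertNth (v : Fin m → ℝ) {G : (Fin (m + 1) → ℝ) → ℂ}
    (hG : ContDiff ℝ 1 G) (t : ℝ) :
    HasDerivAt (fun s : ℝ => G (j.insertNth s v))
      (fderiv ℝ G (j.insertNth t v) (Pi.single j 1)) t := by
  have hins := insertNth_eq_affine (j := j) v
  have h1 : HasDerivAt (fun s : ℝ => (j.insertNth (0 : ℝ) v : Fin (m + 1) → ℝ)
        + s • (Pi.single j 1 : Fin (m + 1) → ℝ))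
      (Pi.single j 1 : Fin (m + 1) → ℝ) t := by
    simpa using ((hasDerivAt_id t).smul_const (Pi.single j 1 : Fin (m + 1) → ℝ)).const_add
      (j.insertNth (0 : ℝ) v : Fin (m + 1) → ℝ)
  have heq : (fun s : ℝ => G (j.insertNth s v))
      = fun s => G ((j.insertNth (0 : ℝ) v : Fin (m + 1) → ℝ)
          + s • (Pi.single j 1 : Fin (m + 1) → ℝ)) := by
    funext s; rw [hins s]
  rw [heq]
  have h3 := (hG.differentiable one_ne_zero (j.insertNth t v)).hasFDerivAt
  rw [hins t] at h3
  have h4 := h3.comp_hasDerivAt t h1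
  rw [← hins t] at h4
  exact h4

lemma sum_insertNth (ε : Fin (m + 1) → ℤ) (v : Fin m → ℝ) (t : ℝ) :
    (∑ k, (ε k : ℂ) * ((j.insertNth t v : Fin (m + 1) → ℝ) k : ℂ))
      = (ε j : ℂ) * t + ∑ i, (ε (j.succAbove i) : ℂ) * (v i : ℂ) := by
  rw [Fin.sum_univ_succAbove (fun k => (ε k : ℂ) * ((j.insertNth t v : Fin (m + 1) → ℝ) k : ℂ)) j]
  simp [Fin.insertNth_apply_same, Fin.insertNth_apply_succAbove]

lemma hasDerivAt_cexp_affine (c A e : ℂ) (t : ℝ) :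
    HasDerivAt (fun s : ℝ => Complex.exp (-c * (e * s + A)))
      (Complex.exp (-c * (e * t + A)) * (-c * e)) t := by
  have hz : HasDerivAt (fun z : ℂ => Complex.exp (-c * (e * z + A)))
      (Complex.exp (-c * (e * (t : ℂ) + A)) * (-c * e)) (t : ℂ) := by
    have h0 : HasDerivAt (fun z : ℂ => -c * (e * z + A)) (-c * e) (t : ℂ) := by
      simpa using (((hasDerivAt_id (t : ℂ)).const_mul e).add_const A).const_mul (-c)
    simpa using h0.cexp
  exact hz.comp_ofReal

/-- The key slice-wise integration by parts identity. -/
lemma key (hT : 0 ≤ T) {c : ℂ} (ε : Fin (m + 1) → ℤ) (hcε : c * (ε j : ℂ) ≠ 0)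
    {G : (Fin (m + 1) → ℝ) → ℂ} (hG : ContDiff ℝ 1 G) (v : Fin m → ℝ) :
    (∫ t : ℝ, (simplexSet (m + 1) T).indicator (phase c ε G) (j.insertNth t v))
      = (c * (ε j : ℂ))⁻¹ *
        ((simplexSet m T).indicator (fun w => phase c ε G (j.insertNth (lowNb T j w) w)) v -
         (simplexSet m T).indicator (fun w => phase c ε G (j.insertNth (upNb T j w) w)) v +
         ∫ t : ℝ, (simplexSet (m + 1) T).indicator
            (phase c ε fun u => fderiv ℝ G u (Pi.single j 1)) (j.insertNth t v)) := by
  by_cases hv : v ∈ simplexSet m T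
  swap
  · have h0 : ∀ t : ℝ, j.insertNth t v ∉ simplexSet (m + 1) T :=
      fun t ht => hv (mem_of_insertNth_mem ht)
    have hz : ∀ H : (Fin (m + 1) → ℝ) → ℂ,
        (∫ t : ℝ, (simplexSet (m + 1) T).indicator H (j.insertNth t v)) = 0 := by
      intro H
      calc (∫ t : ℝ, (simplexSet (m + 1) T).indicator H (j.insertNth t v))
          = ∫ _ : ℝ, (0 : ℂ) := integral_congr_ae (Filter.Eventually.of_forall fun t =>
            Set.indicator_of_notMem (h0 t) _)
        _ = 0 := integral_zero _ _
    rw [hz, hz, Set.indicator_of_notMem hv, Set.indicator_of_notMem hv]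
    ring
  · -- main case
    set a := lowNb T j v with ha
    set b := upNb T j v with hb
    have hab : a ≤ b := lowNb_le_upNb hv hT
    set G' : (Fin (m + 1) → ℝ) → ℂ := fun u => fderiv ℝ G u (Pi.single j 1) with hG'
    have hG'c : Continuous G' := (hG.continuous_fderiv one_ne_zero).clm_apply continuous_const
    -- reduce indicator integrals to interval integrals
    have hred : ∀ H : (Fin (m + 1) → ℝ) → ℂ,
        (∫ t : ℝ, (simplexSet (m + 1) T).indicator H (j.insertNth t v))
          = ∫ t in a..b, H (j.insertNth t v) := by
      intro H
      have hae : ∀ᵐ t : ℝ, (simplexSet (m + 1) T).indicator H (j.insertNth t v)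
          = Set.indicator (Set.Ioo a b) (fun t => H (j.insertNth t v)) t := by
        filter_upwards [compl_mem_ae_iff.2 (measure_singleton a),
          compl_mem_ae_iff.2 (measure_singleton b)] with t hta htb
        simp only [Set.mem_compl_iff, Set.mem_singleton_iff] at hta htb
        by_cases hmem : j.insertNth t v ∈ simplexSet (m + 1) T
        · have htIcc := insertNth_mem_subset_Icc hmem
          have htIoo : t ∈ Set.Ioo a b :=
            ⟨htIcc.1.lt_of_ne (Ne.symm hta), htIcc.2.lt_of_ne htb⟩
          rw [Set.indicator_of_mem hmem, Set.indicator_of_mem htIoo]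
        · have htIoo : t ∉ Set.Ioo a b := fun h => hmem (Ioo_subset_insertNth_mem hv hT h)
          rw [Set.indicator_of_notMem hmem, Set.indicator_of_notMem htIoo]
      rw [integral_congr_ae hae, integral_indicator measurableSet_Ioo,
        intervalIntegral.integral_of_le hab, integral_Ioc_eq_integral_Ioo]
    -- derivative identity
    set A : ℂ := ∑ i, (ε (j.succAbove i) : ℂ) * (v i : ℂ) with hA
    have hder : ∀ t : ℝ, HasDerivAt (fun s : ℝ => phase c ε G (j.insertNth s v))
        (-(c * (ε j : ℂ)) * phase c ε G (j.insertNth t v)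
          + phase c ε G' (j.insertNth t v)) t := by
      intro t
      have h1 := hasDerivAt_cexp_affine c A (ε j : ℂ) t
      have h2 := hasDerivAt_G_insertNth (j := j) v hG t
      have h3 : HasDerivAt (fun s : ℝ => Complex.exp (-c * ((ε j : ℂ) * s + A)) * G (j.insertNth s v)) _ t := h1.mul h2
      have hfun : (fun s : ℝ => Complex.exp (-c * ((ε j : ℂ) * s + A)) * G (j.insertNth s v))
          = fun s => phase c ε G (j.insertNth s v) := by
        funext s; simp only [phase]; rw [sum_insertNth ε v s, hA]
      rw [hfun] at h3
      convert h3 using 1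
      simp only [phase, hG']
      rw [sum_insertNth ε v t, hA]
      ring
    -- interval integrability
    have hcont1 : Continuous fun t : ℝ => phase c ε G (j.insertNth t v) :=
      (continuous_phase c ε hG.continuous).comp (continuous_insertNth v)
    have hcont2 : Continuous fun t : ℝ => phase c ε G' (j.insertNth t v) :=
      (continuous_phase c ε hG'c).comp (continuous_insertNth v)
    have hibp : (∫ t in a..b, (-(c * (ε j : ℂ)) * phase c ε G (j.insertNth t v)
          + phase c ε G' (j.insertNth t v)))
        = phase c ε G (j.insertNth b v) - phase c ε G (j.insertNth a v) :=
      intervalIntegral.integral_eq_sub_of_hasDerivAt (fun t _ => hder t)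
        (((continuous_const.mul hcont1).add hcont2).intervalIntegrable a b)
    rw [intervalIntegral.integral_add
        (f := fun t => -(c * (ε j : ℂ)) * phase c ε G (j.insertNth t v))
        ((continuous_const.mul hcont1).intervalIntegrable a b)
        (hcont2.intervalIntegrable a b),
      intervalIntegral.integral_const_mul] at hibp
    rw [hred (phase c ε G), hred (phase c ε G'), Set.indicator_of_mem hv,
      Set.indicator_of_mem hv]
    have h2 : (c * (ε j : ℂ)) * (∫ t in a..b, phase c ε G (j.insertNth t v))
        = phase c ε G (j.insertNth (lowNb T j v) v) - phase c ε G (j.insertNth (upNb T j v) v)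
          + ∫ t in a..b, phase c ε G' (j.insertNth t v) := by
      rw [← ha, ← hb]
      linear_combination -hibp
    rw [← h2, inv_mul_cancel_left₀ hcε]

lemma continuous_lowNb : Continuous fun w : Fin m → ℝ => lowNb T j w := by
  unfold lowNb
  by_cases h : 0 < j.val
  · simp only [dif_pos h]; exact continuous_apply _
  · simp only [dif_neg h]; exact continuous_const

lemma continuous_upNb : Continuous fun w : Fin m → ℝ => upNb T j w := by
  unfold upNb
  by_cases h : j.val < m
  · simp only [dif_pos h]; exact continuous_apply _
  · simp only [dif_neg h]; exact continuous_const

lemma continuous_insertNth_fun {L : (Fin m → ℝ) → ℝ} (hL : Continuous L) :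
    Continuous fun w : Fin m → ℝ => (j.insertNth (L w) w : Fin (m + 1) → ℝ) := by
  refine continuous_pi fun l => ?_
  rcases eq_or_ne l j with rfl | hl
  · simp only [Fin.insertNth_apply_same]; exact hL
  · obtain ⟨i, rfl⟩ := Fin.exists_succAbove_eq hl
    simp only [Fin.insertNth_apply_succAbove]
    exact continuous_apply i

lemma fubini_aux (j : Fin (m + 1)) (F : (Fin (m + 1) → ℝ) → ℂ)
    (hF : Integrable F (volume : Measure (Fin (m + 1) → ℝ))) :
    Integrable (fun p : ℝ × (Fin m → ℝ) => F (j.insertNth p.1 p.2))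
        ((volume : Measure ℝ).prod (volume : Measure (Fin m → ℝ))) ∧
    (∫ u, F u) = ∫ v : Fin m → ℝ, ∫ t : ℝ, F (j.insertNth t v) := by
  set e : ℝ × (Fin m → ℝ) ≃ᵐ (Fin (m + 1) → ℝ) :=
    (MeasurableEquiv.piFinSuccAbove (fun _ => ℝ) j).symm with he
  have hem : MeasurePreserving e :=
    (volume_preserving_piFinSuccAbove (fun _ : Fin (m + 1) => ℝ) j).symm _
  have happ : ∀ p : ℝ × (Fin m → ℝ), e p = j.insertNth p.1 p.2 := by
    intro p
    simp [he, MeasurableEquiv.piFinSuccAbove_symm_apply, Fin.insertNthEquiv]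
  have hint : Integrable (fun p : ℝ × (Fin m → ℝ) => F (j.insertNth p.1 p.2))
      ((volume : Measure ℝ).prod (volume : Measure (Fin m → ℝ))) := by
    have := (hem.integrable_comp_emb e.measurableEmbedding (g := F)).2 hF
    rw [Measure.volume_eq_prod] at this
    simpa [Function.comp_def, happ] using this
  refine ⟨hint, ?_⟩
  calc (∫ u, F u) = ∫ p : ℝ × (Fin m → ℝ), F (e p) :=
        (hem.integral_comp e.measurableEmbedding F).symm
    _ = ∫ p : ℝ × (Fin m → ℝ), F (j.insertNth p.1 p.2) := by simp_rw [happ]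
    _ = ∫ v : Fin m → ℝ, ∫ t : ℝ, F (j.insertNth t v) := by
        rw [Measure.volume_eq_prod]
        exact integral_prod_symm _ hint

/-- Main auxiliary statement. -/
lemma main_aux (hT : 0 < T) {c : ℂ} (ε : Fin (m + 1) → ℤ) (hcε : c * (ε j : ℂ) ≠ 0)
    {G : (Fin (m + 1) → ℝ) → ℂ} (hG : ContDiff ℝ 1 G) :
    (∫ u, ((simplexSet (m + 1) T).indicator (phase c ε G)) u)
      = (1 / (c * (ε j : ℂ))) *
        ((∫ v, (simplexSet m T).indicator
            (fun w => phase c ε G (j.insertNth (lowNb T j w) w)) v)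
         - (∫ v, (simplexSet m T).indicator
            (fun w => phase c ε G (j.insertNth (upNb T j w) w)) v)
         + ∫ u, ((simplexSet (m + 1) T).indicator
            (phase c ε fun u => fderiv ℝ G u (Pi.single j 1))) u) := by
  have hT0 : (0 : ℝ) ≤ T := hT.le
  have hGc : Continuous G := hG.continuous
  set G' : (Fin (m + 1) → ℝ) → ℂ := fun u => fderiv ℝ G u (Pi.single j 1) with hG'
  have hG'c : Continuous G' := (hG.continuous_fderiv one_ne_zero).clm_apply continuous_const
  have hintE := integrable_indicator_simplexSet (n := m + 1) T (continuous_phase c ε hGc)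
  have hintD := integrable_indicator_simplexSet (n := m + 1) T (continuous_phase c ε hG'c)
  obtain ⟨hprodE, hfubE⟩ := fubini_aux j _ hintE
  obtain ⟨hprodD, hfubD⟩ := fubini_aux j _ hintD
  rw [hfubE, hfubD]
  have hIA : Integrable fun v : Fin m → ℝ => (simplexSet m T).indicator
      (fun w => phase c ε G (j.insertNth (lowNb T j w) w)) v :=
    integrable_indicator_simplexSet T
      ((continuous_phase c ε hGc).comp (continuous_insertNth_fun continuous_lowNb))
  have hIB : Integrable fun v : Fin m → ℝ => (simplexSet m T).indicator
      (fun w => phase c ε G (j.insertNth (upNb T j w) w)) v :=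
    integrable_indicator_simplexSet T
      ((continuous_phase c ε hGc).comp (continuous_insertNth_fun continuous_upNb))
  have hIC : Integrable fun v : Fin m → ℝ =>
      ∫ t : ℝ, (simplexSet (m + 1) T).indicator (phase c ε G') (j.insertNth t v) :=
    hprodD.integral_prod_right
  calc (∫ v : Fin m → ℝ, ∫ t : ℝ, (simplexSet (m + 1) T).indicator (phase c ε G)
          (j.insertNth t v))
      = ∫ v : Fin m → ℝ, (c * (ε j : ℂ))⁻¹ *
          ((simplexSet m T).indicator (fun w => phase c ε G (j.insertNth (lowNb T j w) w)) v -
           (simplexSet m T).indicator (fun w => phase c ε G (j.insertNth (upNb T j w) w)) v +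
           ∫ t : ℝ, (simplexSet (m + 1) T).indicator (phase c ε G') (j.insertNth t v)) :=
        integral_congr_ae (Filter.Eventually.of_forall fun v => key hT0 ε hcε hG v)
    _ = (c * (ε j : ℂ))⁻¹ * ∫ v : Fin m → ℝ,
          ((simplexSet m T).indicator (fun w => phase c ε G (j.insertNth (lowNb T j w) w)) v -
           (simplexSet m T).indicator (fun w => phase c ε G (j.insertNth (upNb T j w) w)) v +
           ∫ t : ℝ, (simplexSet (m + 1) T).indicator (phase c ε G') (j.insertNth t v)) :=
        integral_const_mul _ _
    _ = (1 / (c * (ε j : ℂ))) *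
        ((∫ v, (simplexSet m T).indicator
            (fun w => phase c ε G (j.insertNth (lowNb T j w) w)) v)
         - (∫ v, (simplexSet m T).indicator
            (fun w => phase c ε G (j.insertNth (upNb T j w) w)) v)
         + ∫ v : Fin m → ℝ, ∫ t : ℝ,
            (simplexSet (m + 1) T).indicator (phase c ε G') (j.insertNth t v)) := by
        have hAB : Integrable (fun v : Fin m → ℝ =>
            (simplexSet m T).indicator (fun w => phase c ε G (j.insertNth (lowNb T j w) w)) v -
            (simplexSet m T).indicator (fun w => phase c ε G (j.insertNth (upNb T j w) w)) v)
            volume := hIA.sub hIB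
        rw [integral_add hAB hIC, integral_sub hIA hIB, one_div]

end
end SimplexIBPAux

open SimplexIBPAux


/-- **Integration by parts on the simplex.** For `G : ℝ^{m+1} → ℂ` continuously
differentiable, `λ ≠ 0`, nonzero integer weights `ε`, and a coordinate `j`, the
oscillatory integral `∫_{0 ≤ u₀ < ⋯ < u_m ≤ T} e^{-2πiλ⟨ε,u⟩} G(u) du` equals
`(2πiλεⱼ)⁻¹ (I⁻ - I⁺ + I_∂)`, where `I⁻` (resp. `I⁺`) is the integral over the
simplex in the remaining variables with `uⱼ` set equal to its lower (resp. upper)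
neighbor (with conventions `u_{-1} = 0`, `u_{m+1} = T`), and `I_∂` is the simplex
integral with `G` replaced by `∂_{uⱼ} G`. -/
theorem simplex_integration_by_parts
    (m : ℕ) (T : ℝ) (hT : 0 < T) (lam : ℝ) (hlam : lam ≠ 0)
    (ε : Fin (m + 1) → ℤ) (hε : ∀ k, ε k ≠ 0) (j : Fin (m + 1))
    (G : (Fin (m + 1) → ℝ) → ℂ) (hG : ContDiff ℝ 1 G) :
    (∫ u in {u : Fin (m + 1) → ℝ | (∀ k, 0 ≤ u k ∧ u k ≤ T) ∧ StrictMono u},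
        Complex.exp (-(2 * Real.pi * Complex.I * lam) * ∑ k, (ε k : ℂ) * (u k : ℂ)) *
          G u ∂volume) =
      (1 / (2 * Real.pi * Complex.I * lam * (ε j : ℂ))) *
        ((∫ v in {v : Fin m → ℝ | (∀ k, 0 ≤ v k ∧ v k ≤ T) ∧ StrictMono v},
            (fun u : Fin (m + 1) → ℝ =>
              Complex.exp
                  (-(2 * Real.pi * Complex.I * lam) * ∑ k, (ε k : ℂ) * (u k : ℂ)) * G u)
              (j.insertNth (if h : 0 < j.val then v ⟨j.val - 1, by omega⟩ else 0) v)
            ∂volume) -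
          (∫ v in {v : Fin m → ℝ | (∀ k, 0 ≤ v k ∧ v k ≤ T) ∧ StrictMono v},
            (fun u : Fin (m + 1) → ℝ =>
              Complex.exp
                  (-(2 * Real.pi * Complex.I * lam) * ∑ k, (ε k : ℂ) * (u k : ℂ)) * G u)
              (j.insertNth (if h : j.val < m then v ⟨j.val, h⟩ else T) v)
            ∂volume) +
          ∫ u in {u : Fin (m + 1) → ℝ | (∀ k, 0 ≤ u k ∧ u k ≤ T) ∧ StrictMono u},
            Complex.exp (-(2 * Real.pi * Complex.I * lam) * ∑ k, (ε k : ℂ) * (u k : ℂ)) *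
              fderiv ℝ G u (Pi.single j 1) ∂volume) := by
  set c : ℂ := 2 * Real.pi * Complex.I * lam with hc
  have hcε : c * (ε j : ℂ) ≠ 0 := by
    apply mul_ne_zero
    · rw [hc]
      refine mul_ne_zero (mul_ne_zero (mul_ne_zero two_ne_zero ?_) Complex.I_ne_zero) ?_
      · exact_mod_cast Real.pi_ne_zero
      · exact_mod_cast hlam
    · exact_mod_cast hε j
  have main := main_aux (j := j) hT ε hcε hG
  rw [integral_indicator (measurableSet_simplexSet (m + 1) T),
    integral_indicator (measurableSet_simplexSet m T),
    integral_indicator (measurableSet_simplexSet m T),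
    integral_indicator (measurableSet_simplexSet (m + 1) T)] at main
  exact main
end

section
/- Let H ∈ (1/2, 1), I ∈ ℕ₊, and a = (a_1,...,a_I) ∈ (ℤ\{0})^I with ∑_{i=1}^I a_i = 0. Let 1 = i_1 < i_2 < ... < i_d < I be exactly the indices i with a_i + a_{i+1} + ... + a_I = 0, and set J* = {1,...,I} \ {i_1,...,i_d}. Define g_a(s) = ∑_{1≤i<j≤I} a_i a_j (s_j − s_i)^{2H}. Then for any 0 < s_1 < ... < s_I and any 1 ≤ k ≤ I, |∂_{s_k} g_a(s)| ≤ 4HI ‖a‖_∞² ∑_{i ∈ J*} (s_i − s_{i−1})^{2H−1}, with s_0 = 0. -/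
open Finset


private lemma rpow_sub_le {p x y : ℝ} (hx : 0 ≤ x) (hxy : x ≤ y) (hp0 : 0 ≤ p) (hp1 : p ≤ 1) :
    y ^ p - x ^ p ≤ (y - x) ^ p := by
  have hyx : 0 ≤ y - x := sub_nonneg.2 hxy
  have h := NNReal.rpow_add_le_add_rpow x.toNNReal (y - x).toNNReal hp0 hp1
  rw [← NNReal.coe_le_coe] at h
  push_cast [NNReal.coe_rpow, Real.coe_toNNReal _ hx, Real.coe_toNNReal _ hyx] at h
  have hxy' : x + (y - x) = y := by ring
  rw [hxy'] at h
  linarith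

private lemma sum_Ioc_telescope (g : ℕ → ℝ) {b : ℕ} (a : ℕ) (hab : a ≤ b) :
    ∑ m ∈ Finset.Ioc a b, (g m - g (m - 1)) = g b - g a := by
  induction b with
  | zero =>
      have : a = 0 := Nat.le_zero.mp hab
      subst this; simp
  | succ n ih =>
      rcases Nat.lt_or_ge a (n + 1) with h | h
      · have han : a ≤ n := Nat.lt_succ_iff.mp h
        rw [Finset.sum_Ioc_succ_top han, ih han]
        simp only [Nat.add_sub_cancel]
        ring
      · have : a = n + 1 := le_antisymm hab h
        subst this; simp

private lemma bound_aux (M : Finset ℕ) (w d δ : ℕ → ℝ) (C : ℝ) (q : ℕ → Prop)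
    [DecidablePred q] (hC : 0 ≤ C)
    (hd0 : ∀ m ∈ M, 0 ≤ d m) (hdδ : ∀ m ∈ M, d m ≤ δ m) (hδ0 : ∀ m ∈ M, 0 ≤ δ m)
    (hw : ∀ m ∈ M, |w m| ≤ C) (hq : ∀ m ∈ M, w m ≠ 0 → q m) :
    |∑ m ∈ M, w m * d m| ≤ ∑ m ∈ M.filter q, C * δ m := by
  calc |∑ m ∈ M, w m * d m| ≤ ∑ m ∈ M, |w m * d m| := Finset.abs_sum_le_sum_abs _ _
    _ ≤ ∑ m ∈ M, (if q m then C * δ m else 0) := by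
        refine Finset.sum_le_sum fun m hm => ?_
        rw [abs_mul, abs_of_nonneg (hd0 m hm)]
        by_cases hwm : w m = 0
        · simp only [hwm, abs_zero, zero_mul]
          split_ifs
          · exact mul_nonneg hC (hδ0 m hm)
          · exact le_refl 0
        · rw [if_pos (hq m hm hwm)]
          exact mul_le_mul (hw m hm) (hdδ m hm) (hd0 m hm) hC
    _ = ∑ m ∈ M.filter q, C * δ m := (Finset.sum_filter _ _).symm

set_option maxHeartbeats 2000000 in
/-- **First derivative bound.** For `H ∈ (1/2,1)`, nonzero integer coefficients `a`
with `∑ aᵢ = 0`, `J* = {i : a_i + ⋯ + a_I ≠ 0}`, and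
`g_a(s) = ∑_{i<j} aᵢ aⱼ (sⱼ-sᵢ)^{2H}`, one has for all `0 < s₁ < ⋯ < s_I` and every `k`:
`|∂_{s_k} g_a(s)| ≤ 4HI‖a‖∞² ∑_{i ∈ J*} (sᵢ - s_{i-1})^{2H-1}` (with `s₀ = 0`). -/
theorem first_derivative_bound_g_a
    (H : ℝ) (hH : H ∈ Set.Ioo (1 / 2 : ℝ) 1)
    (I : ℕ) (hI : 0 < I) (a : Fin I → ℤ)
    (hanz : ∀ i, a i ≠ 0) (hsum : ∑ i, a i = 0)
    (s : Fin I → ℝ) (hspos : ∀ i, 0 < s i) (hsmono : StrictMono s) (k : Fin I) :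
    |fderiv ℝ
        (fun u : Fin I → ℝ =>
          ∑ i, ∑ j, if i < j then (a i : ℝ) * (a j : ℝ) * (u j - u i) ^ (2 * H) else 0)
        s (Pi.single k 1)| ≤
      4 * H * I * ((Finset.univ.sup fun i => (a i).natAbs : ℕ) : ℝ) ^ 2 *
        ∑ i ∈ Finset.univ.filter
            (fun i : Fin I => ∑ m ∈ Finset.univ.filter (fun m => i ≤ m), a m ≠ 0),
          (s i - if h : 0 < i.val then s ⟨i.val - 1, by omega⟩ else 0) ^ (2 * H - 1) := by
  have hder : fderiv ℝ
        (fun u : Fin I → ℝ =>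
          ∑ i, ∑ j, if i < j then (a i : ℝ) * (a j : ℝ) * (u j - u i) ^ (2 * H) else 0)
        s (Pi.single k 1) =
      2 * H * (a k : ℝ) *
        ((∑ i ∈ Finset.univ.filter (· < k), (a i : ℝ) * (s k - s i) ^ (2 * H - 1)) -
         (∑ j ∈ Finset.univ.filter (k < ·), (a j : ℝ) * (s j - s k) ^ (2 * H - 1))) := by
      classical
      set c : Fin I → Fin I → ℝ :=
        fun i j => (a i : ℝ) * (a j : ℝ) * (2 * H * (s j - s i) ^ (2 * H - 1)) with hc
      set G : (Fin I → ℝ) →L[ℝ] ℝ :=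
        ∑ i : Fin I, ∑ j : Fin I, if i < j then
          (c i j) • ((ContinuousLinearMap.proj j : (Fin I → ℝ) →L[ℝ] ℝ) -
            ContinuousLinearMap.proj i) else 0 with hGdef
      have hG : HasFDerivAt
          (fun u : Fin I → ℝ =>
            ∑ i, ∑ j, if i < j then (a i : ℝ) * (a j : ℝ) * (u j - u i) ^ (2 * H) else 0) G s := by
        apply HasFDerivAt.fun_sum; intro i _
        apply HasFDerivAt.fun_sum; intro j _
        by_cases hij : i < j
        · simp only [if_pos hij]
          have hlin : HasFDerivAt (fun u : Fin I → ℝ => u j - u i)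
              ((ContinuousLinearMap.proj j : (Fin I → ℝ) →L[ℝ] ℝ) - ContinuousLinearMap.proj i) s :=
            ((ContinuousLinearMap.proj j : (Fin I → ℝ) →L[ℝ] ℝ) -
              ContinuousLinearMap.proj i).hasFDerivAt
          have hpow : HasDerivAt (fun t : ℝ => t ^ (2 * H))
              (2 * H * (s j - s i) ^ (2 * H - 1)) (s j - s i) :=
            Real.hasDerivAt_rpow_const (Or.inl (ne_of_gt (sub_pos.2 (hsmono hij))))
          have hcomp := hpow.comp_hasFDerivAt s hlin
          have hmul := hcomp.const_mul ((a i : ℝ) * (a j : ℝ))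
          have hsm : c i j • ((ContinuousLinearMap.proj j : (Fin I → ℝ) →L[ℝ] ℝ) -
              ContinuousLinearMap.proj i) = ((a i : ℝ) * (a j : ℝ)) •
              (2 * H * (s j - s i) ^ (2 * H - 1)) •
              ((ContinuousLinearMap.proj j : (Fin I → ℝ) →L[ℝ] ℝ) - ContinuousLinearMap.proj i) := by
            rw [hc, smul_smul]
          rw [hsm]
          exact hmul
        · simp only [if_neg hij]
          exact hasFDerivAt_const 0 s
      rw [hG.fderiv]
      have e1 : G (Pi.single k 1) = ∑ i : Fin I, ∑ j : Fin I,
          ((if j = k then (if i < j then c i j else 0) else 0) -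
           (if i = k then (if i < j then c i j else 0) else 0)) := by
        rw [hGdef]
        simp only [ContinuousLinearMap.sum_apply]
        refine Finset.sum_congr rfl fun i _ => Finset.sum_congr rfl fun j _ => ?_
        by_cases hij : i < j
        · simp only [if_pos hij, ContinuousLinearMap.smul_apply, ContinuousLinearMap.sub_apply,
            ContinuousLinearMap.proj_apply, Pi.single_apply, smul_eq_mul]
          by_cases hjk : j = k <;> by_cases hik : i = k <;>
            simp [hjk, hik] <;> first | ring | (subst hjk; subst hik; exact absurd hij (lt_irrefl _))
        · simp [if_neg hij]
      rw [e1]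
      rw [Finset.sum_congr rfl (fun i _ => Finset.sum_sub_distrib _ _), Finset.sum_sub_distrib]
      have e2 : ∑ i : Fin I, ∑ j : Fin I, (if j = k then (if i < j then c i j else 0) else 0)
          = ∑ i ∈ Finset.univ.filter (· < k), c i k := by
        rw [Finset.sum_congr rfl (fun i _ => Finset.sum_ite_eq' Finset.univ k
          (fun j => if i < j then c i j else 0))]
        simp [Finset.sum_filter]
      have e3 : ∑ i : Fin I, ∑ j : Fin I, (if i = k then (if i < j then c i j else 0) else 0)
          = ∑ j ∈ Finset.univ.filter (k < ·), c k j := by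
        have : ∀ i : Fin I, ∑ j : Fin I, (if i = k then (if i < j then c i j else 0) else 0)
            = if i = k then (∑ j : Fin I, if i < j then c i j else 0) else 0 := by
          intro i; split_ifs <;> simp_all
        rw [Finset.sum_congr rfl (fun i _ => this i),
          Finset.sum_ite_eq' Finset.univ k]
        simp [Finset.sum_filter]
      rw [e2, e3, hc]
      rw [mul_sub]
      congr 1 <;> rw [Finset.mul_sum] <;> exact Finset.sum_congr rfl fun i _ => by ring
  rw [hder]
  classical
  obtain ⟨hH1, hH2⟩ := hH
  set p : ℝ := 2 * H - 1 with hp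
  have hp0 : 0 < p := by simp only [hp]; linarith
  have hp1 : p ≤ 1 := by simp only [hp]; linarith
  set LS : ℝ := ∑ i ∈ Finset.univ.filter (· < k), (a i : ℝ) * (s k - s i) ^ p with hLSdef
  set RS : ℝ := ∑ j ∈ Finset.univ.filter (k < ·), (a j : ℝ) * (s j - s k) ^ p with hRSdef
  set Aa : ℕ → ℤ := fun m => if h : m < I then a ⟨m, h⟩ else 0 with hAadef
  set Ss : ℕ → ℝ := fun m => if h : m < I then s ⟨m, h⟩ else 0 with hSsdef
  set T : ℕ → ℤ := fun m => ∑ j ∈ Finset.Ico m I, Aa j with hTdef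
  set Δ : ℕ → ℝ := fun m => Ss m - Ss (m - 1) with hΔdef
  set K : ℕ := k.val with hKdef
  have hK : K < I := k.isLt
  set Amax : ℝ := ((Finset.univ.sup fun i => (a i).natAbs : ℕ) : ℝ) with hAmaxdef
  have hAmax0 : 0 ≤ Amax := Nat.cast_nonneg _
  -- basic facts
  have hAa : ∀ i : Fin I, Aa i.val = a i := fun i => by simp [hAadef, i.isLt]
  have hSs : ∀ i : Fin I, Ss i.val = s i := fun i => by simp [hSsdef, i.isLt]
  have hSsmono : ∀ {m n : ℕ}, m ≤ n → n < I → Ss m ≤ Ss n := by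
    intro m n hmn hn
    have hm : m < I := lt_of_le_of_lt hmn hn
    simp only [hSsdef, dif_pos hm, dif_pos hn]
    exact hsmono.monotone (show (⟨m, hm⟩ : Fin I) ≤ ⟨n, hn⟩ from hmn)
  have habs : ∀ m, |(Aa m : ℝ)| ≤ Amax := by
    intro m
    by_cases h : m < I
    · simp only [hAadef, dif_pos h]
      rw [← Int.cast_abs, Int.abs_eq_natAbs, Int.cast_natCast]
      exact Nat.cast_le.mpr (Finset.le_sup (f := fun i : Fin I => (a i).natAbs)
        (Finset.mem_univ (⟨m, h⟩ : Fin I)))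
    · simp [hAadef, dif_neg h, hAmax0]
  have hTb : ∀ m, |(T m : ℝ)| ≤ I * Amax := by
    intro m
    have h1 : |(T m : ℝ)| ≤ ∑ j ∈ Finset.Ico m I, |(Aa j : ℝ)| := by
      rw [hTdef]
      push_cast
      exact Finset.abs_sum_le_sum_abs _ _
    have h2 : ∑ j ∈ Finset.Ico m I, |(Aa j : ℝ)| ≤ (Finset.Ico m I).card * Amax := by
      rw [← smul_eq_mul, Nat.cast_smul_eq_nsmul]
      exact Finset.sum_le_card_nsmul _ _ _ fun j _ => habs j
    have h3 : ((Finset.Ico m I).card : ℝ) ≤ I := by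
      rw [Nat.card_Ico]
      exact_mod_cast Nat.sub_le I m
    calc |(T m : ℝ)| ≤ ((Finset.Ico m I).card : ℝ) * Amax := le_trans h1 h2
      _ ≤ I * Amax := mul_le_mul_of_nonneg_right h3 hAmax0
  have hIA : 0 ≤ (I : ℝ) * Amax := mul_nonneg (Nat.cast_nonneg _) hAmax0
  have hΔ0 : ∀ m, m < I → 0 ≤ Δ m := by
    intro m hm
    rcases Nat.eq_zero_or_pos m with h | h
    · subst h; simp [hΔdef]
    · exact sub_nonneg.2 (hSsmono (Nat.sub_le m 1) hm)
  have hsumR : ∑ n ∈ Finset.range I, Aa n = 0 := by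
    have := Fin.sum_univ_eq_sum_range (fun n => Aa n) I
    rw [← this]
    rw [Finset.sum_congr rfl fun i _ => hAa i]
    exact hsum
  have hpre : ∀ n, n ≤ I → (∑ m ∈ Finset.range n, (Aa m : ℝ)) = -(T n : ℝ) := by
    intro n hn
    have := Finset.sum_range_add_sum_Ico Aa hn
    rw [hsumR] at this
    have : (∑ m ∈ Finset.range n, Aa m) + T n = 0 := by rw [hTdef]; exact this
    have := congrArg (fun z : ℤ => (z : ℝ)) this
    push_cast at this ⊢
    linarith
  -- left sum
  set dL : ℕ → ℝ := fun n => (Ss K - Ss (n - 1)) ^ p - (Ss K - Ss n) ^ p with hdLdef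
  have hL1 : LS = ∑ m ∈ Finset.range K, (Aa m : ℝ) * (Ss K - Ss m) ^ p := by
    rw [hLSdef, Finset.sum_filter]
    rw [Finset.sum_congr rfl (fun i (_ : i ∈ Finset.univ) => show
      (if i < k then (a i : ℝ) * (s k - s i) ^ p else 0)
      = (fun m : ℕ => if m < K then (Aa m : ℝ) * (Ss K - Ss m) ^ p else 0) i.val from by
        simp only [hAa, hSs, hKdef, Fin.lt_def])]
    rw [Fin.sum_univ_eq_sum_range (fun m : ℕ => if m < K then (Aa m : ℝ) * (Ss K - Ss m) ^ p else 0) I]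
    rw [← Finset.sum_subset (Finset.range_subset_range.2 hK.le)
      (fun x _ hx => by rw [if_neg (by simpa using hx)])]
    exact Finset.sum_congr rfl fun m hm => if_pos (Finset.mem_range.mp hm)
  have hL2 : ∑ m ∈ Finset.range K, (Aa m : ℝ) * (Ss K - Ss m) ^ p
      = ∑ n ∈ Finset.Ioc 0 K, (-(T n : ℝ)) * dL n := by
    rw [Finset.sum_congr rfl (fun m hm => by
      rw [show (Ss K - Ss m) ^ p = ∑ n ∈ Finset.Ioc m K, dL n from by
        have ht := sum_Ioc_telescope (fun n => -((Ss K - Ss n) ^ p)) m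
          (le_of_lt (Finset.mem_range.mp hm))
        rw [Finset.sum_congr rfl (fun n _ => show
            -(Ss K - Ss n) ^ p - -(Ss K - Ss (n - 1)) ^ p = dL n from by
          rw [hdLdef]; ring)] at ht
        have h0 : (Ss K - Ss K) ^ p = 0 := by
          rw [sub_self, Real.zero_rpow (ne_of_gt hp0)]
        rw [h0] at ht
        linarith [ht]])]
    rw [Finset.sum_congr rfl (fun m _ => Finset.mul_sum _ _ _)]
    rw [Finset.sum_comm' (s := Finset.range K) (t := fun m => Finset.Ioc m K)
      (t' := Finset.Ioc 0 K) (s' := fun n => Finset.range n)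
      (by intro m n; simp only [Finset.mem_range, Finset.mem_Ioc]; omega)]
    refine Finset.sum_congr rfl fun n hn => ?_
    rw [← Finset.sum_mul]
    rw [hpre n (le_trans (Finset.mem_Ioc.mp hn).2 hK.le)]
  have hLbound : |LS| ≤ ∑ n ∈ (Finset.Ioc 0 K).filter (fun n => T n ≠ 0), ((I : ℝ) * Amax) * Δ n ^ p := by
    rw [hL1, hL2]
    apply bound_aux _ _ _ _ _ _ hIA
    · intro n hn
      obtain ⟨hn1, hn2⟩ := Finset.mem_Ioc.mp hn
      rw [hdLdef]
      have h1 : Ss n ≤ Ss K := hSsmono hn2 hK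
      have h2 : Ss (n - 1) ≤ Ss n := hSsmono (Nat.sub_le n 1) (lt_of_le_of_lt hn2 hK)
      simp only [sub_nonneg]
      exact Real.rpow_le_rpow (by linarith) (by linarith) hp0.le
    · intro n hn
      obtain ⟨hn1, hn2⟩ := Finset.mem_Ioc.mp hn
      have h1 : Ss n ≤ Ss K := hSsmono hn2 hK
      have h2 : Ss (n - 1) ≤ Ss n := hSsmono (Nat.sub_le n 1) (lt_of_le_of_lt hn2 hK)
      have := rpow_sub_le (x := Ss K - Ss n) (y := Ss K - Ss (n - 1))
        (by linarith) (by linarith) hp0.le hp1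
      rw [hdLdef, hΔdef]
      simp only
      calc (Ss K - Ss (n - 1)) ^ p - (Ss K - Ss n) ^ p
          ≤ (Ss K - Ss (n - 1) - (Ss K - Ss n)) ^ p := this
        _ = (Ss n - Ss (n - 1)) ^ p := by ring_nf
    · intro n hn
      exact Real.rpow_nonneg (hΔ0 n (lt_of_le_of_lt (Finset.mem_Ioc.mp hn).2 hK)) _
    · intro n _
      rw [abs_neg]; exact hTb n
    · intro n _ h
      intro hT0
      exact h (by rw [hT0]; simp)
  -- right sum
  set dR : ℕ → ℝ := fun n => (Ss n - Ss K) ^ p - (Ss (n - 1) - Ss K) ^ p with hdRdef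
  have hR1 : RS = ∑ m ∈ Finset.Ico (K + 1) I, (Aa m : ℝ) * (Ss m - Ss K) ^ p := by
    rw [hRSdef, Finset.sum_filter]
    rw [Finset.sum_congr rfl (fun j (_ : j ∈ Finset.univ) => show
      (if k < j then (a j : ℝ) * (s j - s k) ^ p else 0)
      = (fun m : ℕ => if K < m then (Aa m : ℝ) * (Ss m - Ss K) ^ p else 0) j.val from by
        simp only [hAa, hSs, hKdef, Fin.lt_def])]
    rw [Fin.sum_univ_eq_sum_range (fun m : ℕ => if K < m then (Aa m : ℝ) * (Ss m - Ss K) ^ p else 0) I]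
    rw [← Finset.sum_subset (show Finset.Ico (K + 1) I ⊆ Finset.range I from fun x hx => by
        simp only [Finset.mem_Ico] at hx; exact Finset.mem_range.mpr hx.2)
      (fun x hx hx' => by
        rw [if_neg]
        simp only [Finset.mem_Ico, not_and, not_le] at hx'
        simp only [Finset.mem_range] at hx
        omega)]
    exact Finset.sum_congr rfl fun m hm => if_pos (by
      simp only [Finset.mem_Ico] at hm; omega)
  have hR2 : ∑ m ∈ Finset.Ico (K + 1) I, (Aa m : ℝ) * (Ss m - Ss K) ^ p
      = ∑ n ∈ Finset.Ico (K + 1) I, (T n : ℝ) * dR n := by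
    rw [Finset.sum_congr rfl (fun m hm => by
      rw [show (Ss m - Ss K) ^ p = ∑ n ∈ Finset.Ioc K m, dR n from by
        have hm' : K ≤ m := by
          simp only [Finset.mem_Ico] at hm; omega
        have ht := sum_Ioc_telescope (fun n => (Ss n - Ss K) ^ p) K hm'
        rw [Finset.sum_congr rfl (fun n _ => show
            (Ss n - Ss K) ^ p - (Ss (n - 1) - Ss K) ^ p = dR n from rfl)] at ht
        have h0 : (Ss K - Ss K) ^ p = 0 := by
          rw [sub_self, Real.zero_rpow (ne_of_gt hp0)]
        rw [h0] at ht
        linarith [ht]])]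
    rw [Finset.sum_congr rfl (fun m _ => Finset.mul_sum _ _ _)]
    rw [Finset.sum_comm' (s := Finset.Ico (K + 1) I) (t := fun m => Finset.Ioc K m)
      (t' := Finset.Ico (K + 1) I) (s' := fun n => Finset.Ico n I)
      (by intro m n; simp only [Finset.mem_Ico, Finset.mem_Ioc]; omega)]
    refine Finset.sum_congr rfl fun n hn => ?_
    rw [← Finset.sum_mul]
    congr 1
    rw [hTdef]
    push_cast
    rfl
  have hRbound : |RS| ≤ ∑ n ∈ (Finset.Ico (K + 1) I).filter (fun n => T n ≠ 0), ((I : ℝ) * Amax) * Δ n ^ p := by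
    rw [hR1, hR2]
    apply bound_aux _ _ _ _ _ _ hIA
    · intro n hn
      obtain ⟨hn1, hn2⟩ := Finset.mem_Ico.mp hn
      rw [hdRdef]
      have h1 : Ss K ≤ Ss (n - 1) := hSsmono (by omega) (by omega)
      have h2 : Ss (n - 1) ≤ Ss n := hSsmono (Nat.sub_le n 1) hn2
      simp only [sub_nonneg]
      exact Real.rpow_le_rpow (by linarith) (by linarith) hp0.le
    · intro n hn
      obtain ⟨hn1, hn2⟩ := Finset.mem_Ico.mp hn
      have h1 : Ss K ≤ Ss (n - 1) := hSsmono (by omega) (by omega)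
      have h2 : Ss (n - 1) ≤ Ss n := hSsmono (Nat.sub_le n 1) hn2
      have := rpow_sub_le (x := Ss (n - 1) - Ss K) (y := Ss n - Ss K)
        (by linarith) (by linarith) hp0.le hp1
      rw [hdRdef, hΔdef]
      simp only
      calc (Ss n - Ss K) ^ p - (Ss (n - 1) - Ss K) ^ p
          ≤ (Ss n - Ss K - (Ss (n - 1) - Ss K)) ^ p := this
        _ = (Ss n - Ss (n - 1)) ^ p := by ring_nf
    · intro n hn
      exact Real.rpow_nonneg (hΔ0 n (Finset.mem_Ico.mp hn).2) _
    · intro n _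
      exact hTb n
    · intro n _ h hT0
      exact h (by rw [hT0]; simp)
  -- RHS sum identification
  have hRHS : (∑ i ∈ Finset.univ.filter
        (fun i : Fin I => ∑ m ∈ Finset.univ.filter (fun m => i ≤ m), a m ≠ 0),
        (s i - if h : 0 < i.val then s ⟨i.val - 1, by omega⟩ else 0) ^ p)
      = ∑ n ∈ (Finset.range I).filter (fun n => T n ≠ 0), Δ n ^ p := by
    have hTfin : ∀ i : Fin I, (∑ m ∈ Finset.univ.filter (fun m => i ≤ m), a m) = T i.val := by
      intro i
      rw [Finset.sum_filter]
      rw [Finset.sum_congr rfl (fun m (_ : m ∈ Finset.univ) => show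
        (if i ≤ m then a m else 0) = (fun n : ℕ => if i.val ≤ n then Aa n else 0) m.val from by
          simp only [hAa, Fin.le_def])]
      rw [Fin.sum_univ_eq_sum_range (fun n : ℕ => if i.val ≤ n then Aa n else 0) I]
      rw [hTdef]
      rw [← Finset.sum_subset (show Finset.Ico i.val I ⊆ Finset.range I from fun x hx => by
          simp only [Finset.mem_Ico] at hx; exact Finset.mem_range.mpr hx.2)
        (fun x hx hx' => by
          rw [if_neg]
          simp only [Finset.mem_Ico, not_and, not_le] at hx'
          simp only [Finset.mem_range] at hx
          omega)]
      exact Finset.sum_congr rfl fun m hm => if_pos (Finset.mem_Ico.mp hm).1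
    rw [Finset.sum_filter, Finset.sum_filter]
    rw [Finset.sum_congr rfl (fun i (_ : i ∈ Finset.univ) => show
      (if (∑ m ∈ Finset.univ.filter (fun m => i ≤ m), a m) ≠ 0 then
        (s i - if h : 0 < i.val then s ⟨i.val - 1, by omega⟩ else 0) ^ p else 0)
      = (fun n : ℕ => if T n ≠ 0 then Δ n ^ p else 0) i.val from by
        rw [hTfin i]
        by_cases h0 : 0 < i.val
        · simp only [dif_pos h0]
          congr 2
          rw [hΔdef]
          simp only
          rw [hSs i]
          congr 1
          simp only [hSsdef]
          rw [dif_pos (show i.val - 1 < I by omega)]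
        · have hi0 : i.val = 0 := by omega
          have hT00 : T i.val = 0 := by
            rw [hi0, hTdef]
            simp only
            rw [show Finset.Ico 0 I = Finset.range I from by
              ext x; simp [Finset.mem_Ico, Finset.mem_range]]
            exact hsumR
          simp [hT00])]
    rw [Fin.sum_univ_eq_sum_range (fun n : ℕ => if T n ≠ 0 then Δ n ^ p else 0) I]
  -- combine
  rw [hRHS]
  set Sfull : ℝ := ∑ n ∈ (Finset.range I).filter (fun n => T n ≠ 0), Δ n ^ p with hSdef
  have hS1 : (∑ n ∈ (Finset.Ioc 0 K).filter (fun n => T n ≠ 0), ((I : ℝ) * Amax) * Δ n ^ p)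
      + (∑ n ∈ (Finset.Ico (K + 1) I).filter (fun n => T n ≠ 0), ((I : ℝ) * Amax) * Δ n ^ p)
      ≤ ((I : ℝ) * Amax) * Sfull := by
    have hdisj : Disjoint ((Finset.Ioc 0 K).filter (fun n => T n ≠ 0))
        ((Finset.Ico (K + 1) I).filter (fun n => T n ≠ 0)) := by
      rw [Finset.disjoint_left]
      intro x hx1 hx2
      simp only [Finset.mem_filter, Finset.mem_Ioc, Finset.mem_Ico] at hx1 hx2
      omega
    rw [← Finset.sum_union hdisj]
    rw [hSdef, Finset.mul_sum]
    apply Finset.sum_le_sum_of_subset_of_nonneg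
    · intro x hx
      simp only [Finset.mem_union, Finset.mem_filter, Finset.mem_Ioc, Finset.mem_Ico,
        Finset.mem_range] at hx ⊢
      rcases hx with ⟨⟨h1, h2⟩, h3⟩ | ⟨⟨h1, h2⟩, h3⟩
      · exact ⟨by omega, h3⟩
      · exact ⟨h2, h3⟩
    · intro x hx _
      simp only [Finset.mem_filter, Finset.mem_range] at hx
      exact mul_nonneg hIA (Real.rpow_nonneg (hΔ0 x hx.1) _)
  have hak : |(a k : ℝ)| ≤ Amax := by
    have := habs k.val
    rw [hAa k] at this
    exact this
  have hS0 : 0 ≤ Sfull := by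
    apply Finset.sum_nonneg
    intro x hx
    simp only [Finset.mem_filter, Finset.mem_range] at hx
    exact Real.rpow_nonneg (hΔ0 x hx.1) _
  have hH0 : 0 < H := by linarith
  calc |2 * H * (a k : ℝ) * (LS - RS)|
      = 2 * H * |(a k : ℝ)| * |LS - RS| := by
        rw [abs_mul, abs_mul]
        rw [abs_of_nonneg (by linarith : (0:ℝ) ≤ 2 * H)]
    _ ≤ 2 * H * Amax * (|LS| + |RS|) := by
        apply mul_le_mul
        · exact mul_le_mul_of_nonneg_left hak (by linarith)
        · exact abs_sub _ _
        · exact abs_nonneg _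
        · positivity
    _ ≤ 2 * H * Amax * (((I : ℝ) * Amax) * Sfull) := by
        apply mul_le_mul_of_nonneg_left _ (by positivity)
        calc _ ≤ _ := add_le_add hLbound hRbound
          _ ≤ ((I : ℝ) * Amax) * Sfull := hS1
    _ ≤ 4 * H * I * Amax ^ 2 * Sfull := by nlinarith [mul_nonneg hIA hS0, mul_nonneg hAmax0 hS0, mul_nonneg (mul_nonneg hIA hS0) hAmax0]
end

section
/- Let H ∈ (1/2,1), a ∈ (ℤ\{0})^I with ∑ a_i = 0, J* as the set of indices i with a_i + ... + a_I ≠ 0, and g_a(s) = ∑_{i<j} a_i a_j (s_j − s_i)^{2H}. Let {p_1 < ... < p_{2n}} ⊂ {1,...,I} with p_{i+1} − p_i ≥ 2 for all i, and let {{p_{j_1}, p_{j_2}}, ..., {p_{j_{2n−1}}, p_{j_{2n}}}} be a partition of {p_1,...,p_{2n}} into pairs. Then there exist indices τ(1) < τ(2) < ... < τ(n), all in J*, such that ∏_{k=1}^n |∂_{s_{p_{j_{2k−1}}}} ∂_{s_{p_{j_{2k}}}} g_a(s)| ≤ 2^n ‖a‖_∞^{2n} ∏_{k=1}^n (s_{τ(k)}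 − s_{τ(k)−1})^{2H−2} for all 0 < s_1 < ... < s_I. -/
open Finset

noncomputable def Lpr {I : ℕ} (i j : Fin I) : (Fin I → ℝ) →L[ℝ] ℝ :=
  (ContinuousLinearMap.proj j : (Fin I → ℝ) →L[ℝ] ℝ) -
    (ContinuousLinearMap.proj i : (Fin I → ℝ) →L[ℝ] ℝ)

@[simp] lemma Lpr_apply {I : ℕ} (i j : Fin I) (w : Fin I → ℝ) : Lpr i j w = w j - w i := rfl

lemma termA {I : ℕ} (i j : Fin I) (c r : ℝ) (u : Fin I → ℝ) (h : u j - u i ≠ 0) :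
    HasFDerivAt (fun w : Fin I → ℝ => c * (w j - w i) ^ r)
      ((c * (r * (u j - u i) ^ (r - 1))) • Lpr i j) u := by
  have h1 : HasFDerivAt (fun w : Fin I → ℝ => w j)
      (ContinuousLinearMap.proj j : (Fin I → ℝ) →L[ℝ] ℝ) u :=
    (ContinuousLinearMap.proj j : (Fin I → ℝ) →L[ℝ] ℝ).hasFDerivAt
  have h2 : HasFDerivAt (fun w : Fin I → ℝ => w i)
      (ContinuousLinearMap.proj i : (Fin I → ℝ) →L[ℝ] ℝ) u :=
    (ContinuousLinearMap.proj i : (Fin I → ℝ) →L[ℝ] ℝ).hasFDerivAt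
  have hL : HasFDerivAt (fun w : Fin I → ℝ => w j - w i) (Lpr i j) u := h1.sub h2
  have hr := Real.hasDerivAt_rpow_const (x := u j - u i) (p := r) (Or.inl h)
  have := (hr.comp_hasFDerivAt u hL).const_mul c
  rw [← smul_smul]
  exact this

lemma termB {I : ℕ} {F : Type*} [NormedAddCommGroup F] [NormedSpace ℝ F]
    (i j : Fin I) (c r : ℝ) (v : F) (u : Fin I → ℝ) (h : u j - u i ≠ 0) :
    HasFDerivAt (fun w : Fin I → ℝ => (c * (w j - w i) ^ r) • v)
      (((c * (r * (u j - u i) ^ (r - 1))) • Lpr i j).smulRight v) u :=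
  (termA i j c r u h).smul_const v

noncomputable def Dg1 (H : ℝ) {I : ℕ} (a : Fin I → ℤ) (u : Fin I → ℝ) :
    (Fin I → ℝ) →L[ℝ] ℝ :=
  ∑ i, ∑ j, if i < j then
    (((a i : ℝ) * (a j : ℝ) * (2 * H)) * (u j - u i) ^ (2 * H - 1)) • Lpr i j else 0

noncomputable def Dg2 (H : ℝ) {I : ℕ} (a : Fin I → ℤ) (s : Fin I → ℝ) :
    (Fin I → ℝ) →L[ℝ] ((Fin I → ℝ) →L[ℝ] ℝ) :=
  ∑ i, ∑ j, if i < j then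
    (((((a i : ℝ) * (a j : ℝ) * (2 * H)) * ((2 * H - 1) * (s j - s i) ^ (2 * H - 1 - 1))) •
      Lpr i j).smulRight (Lpr i j)) else 0

lemma hasFDerivAt_g (H : ℝ) {I : ℕ} (a : Fin I → ℤ) (u : Fin I → ℝ)
    (hu : ∀ i j : Fin I, i < j → u i < u j) :
    HasFDerivAt (fun u : Fin I → ℝ =>
        ∑ i, ∑ j, if i < j then (a i : ℝ) * (a j : ℝ) * (u j - u i) ^ (2 * H) else 0)
      (Dg1 H a u) u := by
  unfold Dg1
  refine HasFDerivAt.fun_sum fun i _ => HasFDerivAt.fun_sum fun j _ => ?_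
  by_cases hij : i < j
  · simp only [if_pos hij]
    have h : u j - u i ≠ 0 := sub_ne_zero.mpr (hu i j hij).ne'
    rw [show ((a i : ℝ) * (a j : ℝ) * (2 * H)) * (u j - u i) ^ (2 * H - 1)
        = ((a i : ℝ) * (a j : ℝ)) * ((2 * H) * (u j - u i) ^ (2 * H - 1)) by ring]
    exact termA i j ((a i : ℝ) * (a j : ℝ)) (2 * H) u h
  · simp only [if_neg hij]
    exact hasFDerivAt_const 0 u

lemma hasFDerivAt_Dg1 (H : ℝ) {I : ℕ} (a : Fin I → ℤ) (s : Fin I → ℝ)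
    (hs : ∀ i j : Fin I, i < j → s i < s j) :
    HasFDerivAt (Dg1 H a) (Dg2 H a s) s := by
  unfold Dg1 Dg2
  refine HasFDerivAt.fun_sum fun i _ => HasFDerivAt.fun_sum fun j _ => ?_
  by_cases hij : i < j
  · simp only [if_pos hij]
    have h : s j - s i ≠ 0 := sub_ne_zero.mpr (hs i j hij).ne'
    exact termB i j ((a i : ℝ) * (a j : ℝ) * (2 * H)) (2 * H - 1) (Lpr i j) s h
  · simp only [if_neg hij]
    exact hasFDerivAt_const 0 s

lemma isOpen_mono {I : ℕ} : IsOpen {u : Fin I → ℝ | ∀ i j : Fin I, i < j → u i < u j} := by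
  have : {u : Fin I → ℝ | ∀ i j : Fin I, i < j → u i < u j}
      = ⋂ i, ⋂ j, {u : Fin I → ℝ | i < j → u i < u j} := by
    ext u; simp [Set.mem_iInter]
  rw [this]
  refine isOpen_iInter_of_finite fun i => isOpen_iInter_of_finite fun j => ?_
  by_cases h : i < j
  · have : {u : Fin I → ℝ | i < j → u i < u j} = {u : Fin I → ℝ | u i < u j} := by
      ext u; simp [h]
    rw [this]
    exact isOpen_lt (continuous_apply i) (continuous_apply j)
  · have : {u : Fin I → ℝ | i < j → u i < u j} = Set.univ := by
      ext u; simp [h]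
    rw [this]; exact isOpen_univ

lemma fderiv_fderiv_eq (H : ℝ) {I : ℕ} (a : Fin I → ℤ) (s : Fin I → ℝ)
    (hsmono : StrictMono s) :
    fderiv ℝ (fderiv ℝ (fun u : Fin I → ℝ =>
        ∑ i, ∑ j, if i < j then (a i : ℝ) * (a j : ℝ) * (u j - u i) ^ (2 * H) else 0)) s
      = Dg2 H a s := by
  have hmem : s ∈ {u : Fin I → ℝ | ∀ i j : Fin I, i < j → u i < u j} :=
    fun i j h => hsmono h
  have hev : fderiv ℝ (fun u : Fin I → ℝ =>
      ∑ i, ∑ j, if i < j then (a i : ℝ) * (a j : ℝ) * (u j - u i) ^ (2 * H) else 0)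
      =ᶠ[nhds s] Dg1 H a := by
    filter_upwards [isOpen_mono.mem_nhds hmem] with u hu
    exact (hasFDerivAt_g H a u hu).fderiv
  rw [hev.fderiv_eq]
  exact (hasFDerivAt_Dg1 H a s (fun i j h => hsmono h)).fderiv

lemma sum_eval {I : ℕ} (k : Fin I → Fin I → ℝ) (q r qv qw : Fin I) (hqr : q < r)
    (hqv : qv = q ∨ qv = r) (hqw : qw = q ∨ qw = r) (hne : qv ≠ qw)
    (v w : Fin I → ℝ) (hv : ∀ x, x ≠ qv → v x = 0) (hw : ∀ x, x ≠ qw → w x = 0) :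
    (∑ i, ∑ j, if i < j then k i j * (v j - v i) * (w j - w i) else 0)
      = k q r * (v r - v q) * (w r - w q) := by
  have hvan : ∀ i j : Fin I, i < j → ¬(i = q ∧ j = r) →
      k i j * (v j - v i) * (w j - w i) = 0 := by
    intro i j hij hnot
    by_cases hv0 : v j - v i = 0
    · rw [hv0]; ring
    by_cases hw0 : w j - w i = 0
    · rw [hw0]; ring
    exfalso
    have hvq : qv = i ∨ qv = j := by
      by_contra hc; push_neg at hc
      exact hv0 (by rw [hv j (fun h => hc.2 h.symm), hv i (fun h => hc.1 h.symm), sub_zero])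
    have hwq : qw = i ∨ qw = j := by
      by_contra hc; push_neg at hc
      exact hw0 (by rw [hw j (fun h => hc.2 h.symm), hw i (fun h => hc.1 h.symm), sub_zero])
    simp only [Fin.ext_iff, Fin.lt_def] at hvq hwq hqv hqw hne hnot hij hqr
    omega
  have hterm : ∀ i j : Fin I, (if i < j then k i j * (v j - v i) * (w j - w i) else 0)
      = if i = q then (if j = r then k q r * (v r - v q) * (w r - w q) else 0) else 0 := by
    intro i j
    by_cases h1 : i = q
    · by_cases h2 : j = r
      · subst h1; subst h2; rw [if_pos hqr, if_pos rfl, if_pos rfl]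
      · rw [if_pos h1, if_neg h2]
        by_cases hij : i < j
        · rw [if_pos hij]; exact hvan i j hij (by tauto)
        · rw [if_neg hij]
    · rw [if_neg h1]
      by_cases hij : i < j
      · rw [if_pos hij]; exact hvan i j hij (by tauto)
      · rw [if_neg hij]
  have h2 : ∀ i : Fin I, (∑ j, if i = q then
      (if j = r then k q r * (v r - v q) * (w r - w q) else 0) else 0)
      = if i = q then k q r * (v r - v q) * (w r - w q) else 0 := by
    intro i; by_cases h : i = q <;> simp [h]
  simp only [hterm, h2, Finset.sum_ite_eq', Finset.mem_univ, if_true]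

lemma abs_eval (H : ℝ) {I : ℕ} (a : Fin I → ℤ) (s : Fin I → ℝ) (hsmono : StrictMono s)
    (q r : Fin I) (hqr : q < r) (v w : Fin I → ℝ)
    (hvw : (v = Pi.single q 1 ∧ w = Pi.single r 1) ∨
      (v = Pi.single r 1 ∧ w = Pi.single q 1)) :
    |iteratedFDeriv ℝ 2 (fun u : Fin I → ℝ =>
        ∑ i, ∑ j, if i < j then (a i : ℝ) * (a j : ℝ) * (u j - u i) ^ (2 * H) else 0) s
      ![v, w]|
    = |(a q : ℝ) * (a r : ℝ) * (2 * H) * (2 * H - 1)| * (s r - s q) ^ (2 * H - 2) := by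
  rw [iteratedFDeriv_two_apply]
  simp only [Matrix.cons_val_zero, Matrix.cons_val_one, Matrix.head_cons]
  rw [fderiv_fderiv_eq H a s hsmono]
  have happ : Dg2 H a s v w = ∑ i, ∑ j, if i < j then
      ((((a i : ℝ) * (a j : ℝ) * (2 * H)) * ((2 * H - 1) * (s j - s i) ^ (2 * H - 1 - 1)))
        * (v j - v i)) * (w j - w i) else 0 := by
    unfold Dg2
    simp only [ContinuousLinearMap.coe_sum', Finset.sum_apply,
      ContinuousLinearMap.sum_apply, apply_ite (fun f : (Fin I → ℝ) →L[ℝ] ((Fin I → ℝ) →L[ℝ] ℝ) => f v),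
      apply_ite (fun f : (Fin I → ℝ) →L[ℝ] ℝ => f w),
      ContinuousLinearMap.smulRight_apply, ContinuousLinearMap.smul_apply,
      ContinuousLinearMap.zero_apply, smul_eq_mul, Lpr_apply]
  rw [happ]
  have hsupq : ∀ x : Fin I, x ≠ q → (Pi.single q 1 : Fin I → ℝ) x = 0 :=
    fun x hx => Pi.single_eq_of_ne hx 1
  have hsupr : ∀ x : Fin I, x ≠ r → (Pi.single r 1 : Fin I → ℝ) x = 0 :=
    fun x hx => Pi.single_eq_of_ne hx 1
  have hX : (0:ℝ) < s r - s q := sub_pos.mpr (hsmono hqr)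
  have hexp : (2 * H - 1 - 1) = 2 * H - 2 := by ring
  have key : ∀ (C : ℝ), |C * (-1)| = |C| := by intro C; rw [mul_neg_one, abs_neg]
  rcases hvw with ⟨hv, hw⟩ | ⟨hv, hw⟩
  · rw [sum_eval _ q r q r hqr (Or.inl rfl) (Or.inr rfl) hqr.ne (v := v) (w := w)
      (fun x hx => hv ▸ hsupq x hx) (fun x hx => hw ▸ hsupr x hx)]
    rw [hv, hw]
    rw [Pi.single_eq_of_ne hqr.ne' 1, Pi.single_eq_same, Pi.single_eq_same,
      Pi.single_eq_of_ne hqr.ne 1]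
    rw [hexp]
    rw [show ((a q : ℝ) * (a r : ℝ) * (2 * H)) * ((2 * H - 1) * (s r - s q) ^ (2 * H - 2))
        * (0 - 1) * (1 - 0)
      = ((a q : ℝ) * (a r : ℝ) * (2 * H) * (2 * H - 1)) * (s r - s q) ^ (2 * H - 2) * (-1)
      from by ring, key, abs_mul, abs_of_nonneg (Real.rpow_nonneg hX.le _)]
  · rw [sum_eval _ q r r q hqr (Or.inr rfl) (Or.inl rfl) hqr.ne' (v := v) (w := w)
      (fun x hx => hv ▸ hsupr x hx) (fun x hx => hw ▸ hsupq x hx)]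
    rw [hv, hw]
    rw [Pi.single_eq_of_ne hqr.ne' 1, Pi.single_eq_same, Pi.single_eq_same,
      Pi.single_eq_of_ne hqr.ne 1]
    rw [hexp]
    rw [show ((a q : ℝ) * (a r : ℝ) * (2 * H)) * ((2 * H - 1) * (s r - s q) ^ (2 * H - 2))
        * (1 - 0) * (0 - 1)
      = ((a q : ℝ) * (a r : ℝ) * (2 * H) * (2 * H - 1)) * (s r - s q) ^ (2 * H - 2) * (-1)
      from by ring, key, abs_mul, abs_of_nonneg (Real.rpow_nonneg hX.le _)]

/-- **Second derivative product bound.** With `H ∈ (1/2,1)`, nonzero integer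
coefficients `a` summing to zero, `g_a(s) = ∑_{i<j} aᵢaⱼ(sⱼ-sᵢ)^{2H}`, indices
`p₁ < ⋯ < p_{2n}` with consecutive gaps at least 2, and any pairing of these indices
(encoded by a permutation `σ` of `Fin (2n)`, the pairs being
`{p(σ(2k)), p(σ(2k+1))}`), there exist indices `τ(1) < ⋯ < τ(n)`, all with nonzero
tail sums, such that the product of the corresponding second mixed partial
derivatives is at most `2^n ‖a‖∞^{2n} ∏ (s_{τ(k)} - s_{τ(k)-1})^{2H-2}`. -/
theorem second_derivative_product_bound
    (H : ℝ) (hH : H ∈ Set.Ioo (1 / 2 : ℝ) 1)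
    (I : ℕ) (hI : 0 < I) (a : Fin I → ℤ)
    (hanz : ∀ i, a i ≠ 0) (hsum : ∑ i, a i = 0)
    (s : Fin I → ℝ) (hspos : ∀ i, 0 < s i) (hsmono : StrictMono s)
    (n : ℕ) (p : Fin (2 * n) → Fin I) (hp : StrictMono p)
    (hgap : ∀ k kk : Fin (2 * n), kk.val = k.val + 1 → (p k).val + 2 ≤ (p kk).val)
    (σ : Equiv.Perm (Fin (2 * n))) :
    ∃ τ : Fin n → Fin I, StrictMono τ ∧
      (∀ k, ∑ m ∈ Finset.univ.filter (fun m => τ k ≤ m), a m ≠ 0) ∧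
      (∏ k : Fin n,
        |iteratedFDeriv ℝ 2
            (fun u : Fin I → ℝ =>
              ∑ i, ∑ j, if i < j then (a i : ℝ) * (a j : ℝ) * (u j - u i) ^ (2 * H) else 0)
            s
            ![Pi.single (p (σ ⟨2 * k.val, by have := k.isLt; omega⟩)) 1,
              Pi.single (p (σ ⟨2 * k.val + 1, by have := k.isLt; omega⟩)) 1]|) ≤
        2 ^ n * ((Finset.univ.sup fun i => (a i).natAbs : ℕ) : ℝ) ^ (2 * n) *
          ∏ k : Fin n,
            (s (τ k) - if h : 0 < (τ k).val then s ⟨(τ k).val - 1, by omega⟩ else 0)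
              ^ (2 * H - 2) := by
  obtain ⟨hH1, hH2⟩ := hH
  set A : ℕ := Finset.univ.sup fun i => (a i).natAbs with hA
  set T : Fin I → ℤ := fun t => ∑ m ∈ Finset.univ.filter (fun m => t ≤ m), a m with hT
  have tail_step : ∀ (x : ℕ) (h2 : x + 1 < I),
      T ⟨x, by omega⟩ = a ⟨x, by omega⟩ + T ⟨x + 1, h2⟩ := by
    intro x h2
    have hins : Finset.univ.filter (fun m : Fin I => (⟨x, by omega⟩ : Fin I) ≤ m)
        = insert (⟨x, by omega⟩ : Fin I)
            (Finset.univ.filter (fun m : Fin I => (⟨x + 1, h2⟩ : Fin I) ≤ m)) := by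
      ext m
      simp only [Finset.mem_filter, Finset.mem_insert, Finset.mem_univ, true_and,
        Fin.le_def, Fin.ext_iff]
      omega
    simp only [hT]
    rw [hins, Finset.sum_insert (by simp [Fin.le_def])]
  have hexists : ∀ (j : Fin (2 * n)) (hj1 : j.val + 1 < 2 * n),
      ∃ t : Fin I, (p j).val < t.val ∧ t.val ≤ (p ⟨j.val + 1, hj1⟩).val ∧ T t ≠ 0 := by
    intro j hj1
    have hgap' : (p j).val + 2 ≤ (p ⟨j.val + 1, hj1⟩).val := hgap j ⟨j.val + 1, hj1⟩ rfl
    have hpI : (p ⟨j.val + 1, hj1⟩).val < I := (p ⟨j.val + 1, hj1⟩).isLt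
    set x := (p j).val with hx
    by_cases h1 : T ⟨x + 1, by omega⟩ = 0
    · refine ⟨⟨x + 2, by omega⟩, by simp, by simp; omega, ?_⟩
      intro h2
      have hstep := tail_step (x + 1) (by omega)
      rw [h1, h2] at hstep
      have : a ⟨x + 1, by omega⟩ = 0 := by omega
      exact hanz _ this
    · exact ⟨⟨x + 1, by omega⟩, by simp, by simp; omega, h1⟩
  -- pair endpoints
  set α : Fin n → Fin (2 * n) := fun k => σ ⟨2 * k.val, by have := k.isLt; omega⟩ with hα
  set β : Fin n → Fin (2 * n) := fun k => σ ⟨2 * k.val + 1, by have := k.isLt; omega⟩ with hβ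
  have hαβ : ∀ k, α k ≠ β k := by
    intro k h
    simp only [hα, hβ] at h
    have := σ.injective h
    simp only [Fin.ext_iff] at this
    omega
  set J : Fin n → Fin (2 * n) := fun k => if α k < β k then α k else β k with hJdef
  set Jx : Fin n → Fin (2 * n) := fun k => if α k < β k then β k else α k with hJxdef
  have hJlt : ∀ k, J k < Jx k := by
    intro k
    simp only [hJdef, hJxdef]
    rcases (hαβ k).lt_or_gt with h | h
    · rw [if_pos h, if_pos h]; exact h
    · rw [if_neg (not_lt.mpr h.le), if_neg (not_lt.mpr h.le)]; exact h
  have hJsucc : ∀ k : Fin n, (J k).val + 1 < 2 * n := by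
    intro k
    have h1 : (J k).val < (Jx k).val := hJlt k
    have h2 := (Jx k).isLt
    omega
  have hJmem : ∀ k, J k = α k ∨ J k = β k := by
    intro k
    simp only [hJdef]
    split_ifs
    · exact Or.inl rfl
    · exact Or.inr rfl
  have hJinj : Function.Injective J := by
    intro k k' h
    have hmem := hJmem k
    have hmem' := hJmem k'
    have : k.val = k'.val := by
      rcases hmem with h1 | h1 <;> rcases hmem' with h2 | h2 <;>
        rw [h1, h2] at h <;> simp only [hα, hβ] at h <;>
        · have := σ.injective h
          simp only [Fin.ext_iff] at this
          omega
    exact Fin.ext this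
  choose t ht1 ht2 ht3 using fun k => hexists (J k) (hJsucc k)
  have hkey : ∀ k k' : Fin n, J k < J k' → (t k).val < (t k').val := by
    intro k k' h
    have h1 : (J k).val + 1 ≤ (J k').val := h
    have h2 : (p ⟨(J k).val + 1, hJsucc k⟩).val ≤ (p (J k')).val := by
      have : (⟨(J k).val + 1, hJsucc k⟩ : Fin (2 * n)) ≤ J k' := by
        simp only [Fin.le_def]; omega
      exact hp.monotone this
    have h3 := ht2 k
    have h4 := ht1 k'
    omega
  have htinj : Function.Injective t := by
    intro k k' h
    by_contra hne
    have hJne : J k ≠ J k' := fun hJe => hne (hJinj hJe)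
    rcases hJne.lt_or_gt with hlt | hlt
    · have := hkey k k' hlt; rw [h] at this; omega
    · have := hkey k' k hlt; rw [h] at this; omega
  set Tset : Finset (Fin I) := Finset.univ.image t with hTset
  have hcard : Tset.card = n := by
    rw [hTset, Finset.card_image_of_injective _ htinj, Finset.card_univ, Fintype.card_fin]
  set e := Tset.orderIsoOfFin hcard with he
  refine ⟨fun k => (e k : Fin I), ?_, ?_, ?_⟩
  · intro k k' hkk
    exact Subtype.coe_lt_coe.mpr (e.strictMono hkk)
  · intro k
    have hmem : (e k : Fin I) ∈ Finset.univ.image t := by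
      rw [← hTset]; exact (e k).2
    obtain ⟨k', -, hk'⟩ := Finset.mem_image.mp hmem
    show T ((e k : Fin I)) ≠ 0
    rw [← hk']
    exact ht3 k'
  · -- the bound
    beta_reduce
    have hA0 : (0:ℝ) ≤ (A:ℝ) := Nat.cast_nonneg A
    have hcabs : ∀ q r : Fin I,
        |(a q : ℝ) * (a r : ℝ) * (2 * H) * (2 * H - 1)| ≤ 2 * (A:ℝ) ^ 2 := by
      intro q r
      have h1 : ∀ x : Fin I, |(a x : ℝ)| ≤ (A:ℝ) := by
        intro x
        have hnat : (a x).natAbs ≤ A := Finset.le_sup (f := fun i => (a i).natAbs) (Finset.mem_univ x)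
        have h2 : |a x| ≤ (A:ℤ) := by rw [Int.abs_eq_natAbs]; exact_mod_cast hnat
        exact_mod_cast h2
      have e1 : |(2 * H : ℝ)| ≤ 2 := by rw [abs_of_pos (by linarith)]; linarith
      have e2 : |(2 * H - 1 : ℝ)| ≤ 1 := by rw [abs_of_pos (by linarith)]; linarith
      calc |(a q : ℝ) * (a r : ℝ) * (2 * H) * (2 * H - 1)|
          = |(a q : ℝ)| * |(a r : ℝ)| * |(2 * H : ℝ)| * |(2 * H - 1 : ℝ)| := by
            rw [abs_mul, abs_mul, abs_mul]
        _ ≤ (A:ℝ) * (A:ℝ) * 2 * 1 := by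
            gcongr <;> first | exact h1 _ | exact e1 | exact e2
        _ = 2 * (A:ℝ) ^ 2 := by ring
    have htpos : ∀ k : Fin n, 0 < (t k).val := by
      intro k
      have := ht1 k
      omega
    have hbound : ∀ k : Fin n,
        |iteratedFDeriv ℝ 2
            (fun u : Fin I → ℝ =>
              ∑ i, ∑ j, if i < j then (a i : ℝ) * (a j : ℝ) * (u j - u i) ^ (2 * H) else 0)
            s
            ![Pi.single (p (σ ⟨2 * k.val, by have := k.isLt; omega⟩)) 1,
              Pi.single (p (σ ⟨2 * k.val + 1, by have := k.isLt; omega⟩)) 1]|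
          ≤ 2 * (A:ℝ) ^ 2 *
            (s (t k) - if h : 0 < (t k).val then s ⟨(t k).val - 1, by omega⟩ else 0)
              ^ (2 * H - 2) := by
      intro k
      rw [dif_pos (htpos k)]
      have hbase : 0 < s (t k) - s ⟨(t k).val - 1, by have := (t k).isLt; omega⟩ := by
        refine sub_pos.mpr (hsmono ?_)
        simp only [Fin.lt_def]
        have := htpos k
        omega
      -- relate J and interval
      have hJle : (p (J k)).val + 1 ≤ (t k).val := ht1 k
      have hlow : s (p (J k)) ≤ s ⟨(t k).val - 1, by have := (t k).isLt; omega⟩ := by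
        refine hsmono.monotone ?_
        simp only [Fin.le_def]
        omega
      have hupp : s (t k) ≤ s (p (Jx k)) := by
        refine hsmono.monotone ?_
        have h2 : (⟨(J k).val + 1, hJsucc k⟩ : Fin (2 * n)) ≤ Jx k := by
          simp only [Fin.le_def]
          have := hJlt k
          omega
        have := hp.monotone h2
        have h3 := ht2 k
        simp only [Fin.le_def] at this ⊢
        omega
      have hplt : p (J k) < p (Jx k) := hp (hJlt k)
      have hrpow : (s (p (Jx k)) - s (p (J k))) ^ (2 * H - 2)
          ≤ (s (t k) - s ⟨(t k).val - 1, by have := (t k).isLt; omega⟩) ^ (2 * H - 2) := by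
        refine Real.rpow_le_rpow_of_nonpos hbase (by linarith) (by linarith)
      rcases (hαβ k).lt_or_gt with hlt | hlt
      · have hJα : J k = α k := by simp only [hJdef]; rw [if_pos hlt]
        have hJxβ : Jx k = β k := by simp only [hJxdef]; rw [if_pos hlt]
        have heval := abs_eval H a s hsmono (p (α k)) (p (β k)) (hp hlt)
          (Pi.single (p (α k)) 1) (Pi.single (p (β k)) 1) (Or.inl ⟨rfl, rfl⟩)
        rw [hα, hβ] at heval
        rw [heval]
        have := hcabs (p (σ ⟨2 * k.val, by have := k.isLt; omega⟩))
          (p (σ ⟨2 * k.val + 1, by have := k.isLt; omega⟩))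
        refine mul_le_mul this ?_ (Real.rpow_nonneg ?_ _) (by positivity)
        · simp only [hJα, hJxβ, hα, hβ] at hrpow
          exact hrpow
        · have hb := sub_pos.mpr (hsmono hplt)
          simp only [hJα, hJxβ, hα, hβ] at hb
          exact hb.le
      · have hJβ : J k = β k := by simp only [hJdef]; rw [if_neg (not_lt.mpr hlt.le)]
        have hJxα : Jx k = α k := by simp only [hJxdef]; rw [if_neg (not_lt.mpr hlt.le)]
        have heval := abs_eval H a s hsmono (p (β k)) (p (α k)) (hp hlt)
          (Pi.single (p (α k)) 1) (Pi.single (p (β k)) 1) (Or.inr ⟨rfl, rfl⟩)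
        rw [hα, hβ] at heval
        rw [heval]
        have := hcabs (p (σ ⟨2 * k.val + 1, by have := k.isLt; omega⟩))
          (p (σ ⟨2 * k.val, by have := k.isLt; omega⟩))
        refine mul_le_mul this ?_ (Real.rpow_nonneg ?_ _) (by positivity)
        · simp only [hJβ, hJxα, hα, hβ] at hrpow
          exact hrpow
        · have hb := sub_pos.mpr (hsmono hplt)
          simp only [hJβ, hJxα, hα, hβ] at hb
          exact hb.le
    have hprod1 := Finset.prod_le_prod (s := Finset.univ)
      (f := fun k : Fin n =>
        |iteratedFDeriv ℝ 2
            (fun u : Fin I → ℝ =>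
              ∑ i, ∑ j, if i < j then (a i : ℝ) * (a j : ℝ) * (u j - u i) ^ (2 * H) else 0)
            s
            ![Pi.single (p (σ ⟨2 * k.val, by have := k.isLt; omega⟩)) 1,
              Pi.single (p (σ ⟨2 * k.val + 1, by have := k.isLt; omega⟩)) 1]|)
      (g := fun k : Fin n => 2 * (A:ℝ) ^ 2 *
        (s (t k) - if h : 0 < (t k).val then s ⟨(t k).val - 1, by omega⟩ else 0)
          ^ (2 * H - 2))
      (fun k _ => abs_nonneg _) (fun k _ => hbound k)
    refine le_trans hprod1 ?_
    have hF := Finset.prod_image (s := Finset.univ) (g := t)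
      (f := fun x : Fin I =>
        (s x - if h : 0 < x.val then s ⟨x.val - 1, by omega⟩ else 0) ^ (2 * H - 2))
      (fun x _ y _ h => htinj h)
    have hEq : (∏ k : Fin n, ((s (t k) -
        if h : 0 < (t k).val then s ⟨(t k).val - 1, by omega⟩ else 0) ^ (2 * H - 2)))
        = ∏ k : Fin n, ((s ((e k : Fin I)) -
            if h : 0 < ((e k : Fin I)).val then s ⟨((e k : Fin I)).val - 1, by omega⟩ else 0)
          ^ (2 * H - 2)) := by
      rw [← hF]
      rw [← Finset.prod_coe_sort Tset (fun x =>
        (s x - if h : 0 < x.val then s ⟨x.val - 1, by omega⟩ else 0) ^ (2 * H - 2))]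
      exact (Fintype.prod_equiv e.toEquiv _ _ (fun k => rfl)).symm
    rw [Finset.prod_mul_distrib, Finset.prod_const, Finset.card_univ, Fintype.card_fin,
      hEq]
    rw [show ((2 * (A:ℝ) ^ 2) ^ n) = 2 ^ n * (A:ℝ) ^ (2 * n) from by ring]
end
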